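/- arXiv:1712.07079 — 7 statements merged into one kernel-verified Lean document; each statement's English description precedes it below -/
import Mathlib

section
/- Let G be a C_{2k}-free simple graph (k ≥ 2) and let a be a vertex of G. Then the number of paths with 3 vertices in G whose first vertex is a is at most (2k-2)·n, where n is the number of vertices of G. Equivalently, ∑_{b ≠ a} f(a,b) ≤ (2k-2)n, where f(a,b) is the number of common neighbors of a and b. -/
/-!
Write `f(a, b) = #(N(a) ∩ N(b))`; a vertex `b ≠ a` lies on `f(a, b)` of the counted paths as an
endpoint and, if `a ~ b`, on `deg b - 1` of them as the middle vertex. Induct on the number of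
non-isolated vertices `b ≠ a`: if some such `b` lies on at most `2k - 2` counted paths, delete its
edges. Otherwise every `f(a, b)` is at most `2k - 2`. Indeed, let `H` be the graph of edges of
`G - a` meeting `S = N(a)`. Then `S` covers the edges of `H`, vertices of `S` have `H`-degree at
least `k` and the others at least `2k - 1`, and a path of `H` with `2k - 2` edges and both ends in
`S` closes through `a` to a `2k`-cycle. If there is none, then along any path or cycle of `H`, `S`
meets every edge but never two vertices at distance `2k - 2`, which forces `S` to recur with
period two. A longest path of `H` in the component of a `b` with `f(a, b) ≥ 2k - 1` and its Pósa
rotations make this incompatible with the degree bounds at its first vertex.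
-/

open SimpleGraph Finset

theorem cover_gap_add_two_mul {σ : ℕ → Prop} {d M : ℕ} (hcov : ∀ i < M, σ i ∨ σ (i + 1))
    (hgap : ∀ i, i + d ≤ M → ¬(σ i ∧ σ (i + d))) {i : ℕ} (hi : σ i) (t : ℕ)
    (ht : i + 2 * t + d ≤ M + 1) : σ (i + 2 * t) := by
  induction t with
  | zero => simpa using hi
  | succ t ih =>
    have h := ih (by omega)
    have h1 : ¬σ (i + 2 * t + d) := fun h' => hgap _ (by omega) ⟨h, h'⟩
    have h2 : σ (i + 2 * t + d + 1) := (hcov _ (by omega)).resolve_left h1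
    have h3 : ¬σ (i + 2 * t + 1) := fun h' =>
      hgap _ (by omega) ⟨h', by rwa [show i + 2 * t + 1 + d = i + 2 * t + d + 1 by omega]⟩
    obtain rfl | hd := Nat.eq_zero_or_pos d
    · exact absurd (by simpa using h2) h3
    rw [show i + 2 * (t + 1) = i + 2 * t + 1 + 1 by omega]
    exact (hcov _ (by omega)).resolve_left h3

theorem card_le_of_forall_succ_notMem {A : Finset ℕ} {N : ℕ} (hA : A ⊆ Icc 1 N)
    (hsucc : ∀ j ∈ A, j + 1 ∉ A) : #A ≤ (N + 1) / 2 := by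
  have hmaps : ∀ j ∈ A, (j + 1) / 2 ∈ Icc 1 ((N + 1) / 2) := fun j hj => by
    have := mem_Icc.1 (hA hj); simp only [mem_Icc]; omega
  have hinj : Set.InjOn (fun j => (j + 1) / 2) A := fun j₁ h₁ j₂ h₂ h => by
    simp only at h
    by_contra hne
    rcases Nat.lt_or_gt_of_ne hne with hlt | hlt
    · exact hsucc j₁ h₁ (by rwa [show j₁ + 1 = j₂ by omega])
    · exact hsucc j₂ h₂ (by rwa [show j₂ + 1 = j₁ by omega])
  simpa using card_le_card_of_injOn _ hmaps hinj

namespace SimpleGraph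

variable {V : Type*} {G H : SimpleGraph V} {S : Set V} {x y : ℕ → V} {m d M : ℕ} {b₀ : V}

/-- A path of length `m` in `H`, listed as `x 0, x 1, …, x m`. A cycle is such a path with
`H.Adj (x m) (x 0)`. -/
def IsPathFun (H : SimpleGraph V) (x : ℕ → V) (m : ℕ) : Prop :=
  (∀ i < m, H.Adj (x i) (x (i + 1))) ∧ ∀ i ≤ m, ∀ j ≤ m, x i = x j → i = j

namespace IsPathFun

theorem comp {M : ℕ} (hx : H.IsPathFun x M) {π : ℕ → ℕ} (hle : ∀ s ≤ m, π s ≤ M)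
    (hinj : ∀ s ≤ m, ∀ t ≤ m, π s = π t → s = t)
    (hadj : ∀ s < m, π (s + 1) = π s + 1 ∨ π s = π (s + 1) + 1 ∨
      H.Adj (x (π s)) (x (π (s + 1)))) :
    H.IsPathFun (fun s => x (π s)) m := by
  refine ⟨fun s hs => ?_, fun s hs t ht hst => hinj s hs t ht (hx.2 _ (hle s hs) _ (hle t ht) hst)⟩
  show H.Adj (x (π s)) (x (π (s + 1)))
  rcases hadj s hs with h | h | h
  · rw [h]; exact hx.1 _ (by have := hle (s + 1) hs; omega)
  · rw [h]; exact (hx.1 _ (by have := hle s hs.le; omega)).symm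
  · exact h

theorem window (hx : H.IsPathFun x m) {i l : ℕ} (h : i + l ≤ m) :
    H.IsPathFun (fun s => x (i + s)) l :=
  hx.comp (fun s hs => by omega) (fun s _ t _ hst => by omega) (fun s _ => Or.inl (by omega))

theorem reverse (hx : H.IsPathFun x m) : H.IsPathFun (fun s => x (m - s)) m :=
  hx.comp (fun s hs => by omega) (fun s hs t ht hst => by omega)
    (fun s hs => Or.inr (Or.inl (by omega)))

/-- The index `if r + s ≤ m then r + s else r + s - (m + 1)` is `(r + s) % (m + 1)`, written
so that `omega` can handle it. -/
theorem rotate (hx : H.IsPathFun x m) (hclose : H.Adj (x m) (x 0)) {r l : ℕ} (hl : l ≤ m)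
    (hr : r + l ≤ 2 * m + 1) :
    H.IsPathFun (fun s => x (if r + s ≤ m then r + s else r + s - (m + 1))) l := by
  refine hx.comp (fun s hs => by split_ifs <;> omega)
    (fun s hs t ht hst => by split_ifs at hst <;> omega) (fun s hs => ?_)
  by_cases hs' : r + s = m
  · right; right
    simpa [hs', show ¬ m + 1 ≤ m by omega, ← add_assoc] using hclose
  · left; split_ifs <;> omega

theorem cons (hx : H.IsPathFun x m) {v : V} (hv : H.Adj v (x 0)) (hnot : ∀ i ≤ m, x i ≠ v) :
    H.IsPathFun (fun i => if i = 0 then v else x (i - 1)) (m + 1) := by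
  refine ⟨fun i hi => ?_, fun i hi j hj hij => ?_⟩
  · rcases i with _ | i
    · simpa using hv
    · simpa using hx.1 i (by omega)
  · rcases i with _ | i <;> rcases j with _ | j <;> simp only [reduceIte, Nat.add_one_ne_zero,
      Nat.add_sub_cancel] at hij
    · rfl
    · exact absurd hij.symm (hnot j (by omega))
    · exact absurd hij (hnot i (by omega))
    · rw [hx.2 i (by omega) j (by omega) hij]

theorem mono (hx : H.IsPathFun x m) (hle : H ≤ G) : G.IsPathFun x m :=
  ⟨fun i hi => hle (hx.1 i hi), hx.2⟩

theorem reachable (hx : H.IsPathFun x m) {i : ℕ} (hi : i ≤ m) : H.Reachable (x 0) (x i) := by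
  induction i with
  | zero => rfl
  | succ i ih => exact (ih (by omega)).trans (hx.1 i hi).reachable

theorem lt_card [Fintype V] (hx : H.IsPathFun x m) : m < Fintype.card V := by
  simpa using Fintype.card_le_of_injective (fun i : Fin (m + 1) => x i)
    fun i j hij => Fin.ext (hx.2 i (by omega) j (by omega) hij)

theorem mem_or_mem_succ (hcov : ∀ u v, H.Adj u v → u ∈ S ∨ v ∈ S) (hx : H.IsPathFun x m) :
    ∀ i < m, x i ∈ S ∨ x (i + 1) ∈ S :=
  fun i hi => hcov _ _ (hx.1 i hi)

theorem not_mem_and_mem (hpath : ∀ y, H.IsPathFun y d → y 0 ∈ S → y d ∉ S)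
    (hx : H.IsPathFun x m) : ∀ i, i + d ≤ m → ¬(x i ∈ S ∧ x (i + d) ∈ S) :=
  fun i hi h => hpath _ (hx.window hi) (by simpa using h.1) h.2

theorem not_adj_of_le (hcov : ∀ u v, H.Adj u v → u ∈ S ∨ v ∈ S)
    (hpath : ∀ y, H.IsPathFun y d → y 0 ∈ S → y d ∉ S) (hd : Even d)
    (hx : H.IsPathFun x m) (hm : d ≤ m) : ¬H.Adj (x m) (x 0) := by
  intro hclose
  have hm0 : 1 ≤ m := Nat.pos_of_ne_zero fun h => by simp [h] at hclose
  -- `σ` reads off `S` along the cycle traversed twice.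
  set σ : ℕ → Prop := fun n => x (if n ≤ m then n else n - (m + 1)) ∈ S with hσ
  have hcov' : ∀ n < 2 * m + 1, σ n ∨ σ (n + 1) := fun n hn => by
    simpa [hσ] using (hx.rotate hclose hm0 (r := n) (by omega)).mem_or_mem_succ hcov 0 (by omega)
  have hgap' : ∀ n, n + d ≤ 2 * m + 1 → ¬(σ n ∧ σ (n + d)) := fun n hn => by
    simpa [hσ] using (hx.rotate hclose hm (r := n) hn).not_mem_and_mem hpath 0 (by omega)
  obtain ⟨c, rfl⟩ := hd
  have hstep : ∀ n ≤ 1, σ n → σ (n + (c + c)) := fun n hn h => by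
    simpa [two_mul] using cover_gap_add_two_mul hcov' hgap' h c (by omega)
  rcases hcov' 0 (by omega) with h | h
  · exact hgap' 0 (by omega) ⟨h, hstep 0 (by omega) h⟩
  · exact hgap' 1 (by omega) ⟨h, hstep 1 le_rfl h⟩

theorem mem_succ_of_mem_of_mem (hcov : ∀ u v, H.Adj u v → u ∈ S ∨ v ∈ S)
    (hpath : ∀ y, H.IsPathFun y d → y 0 ∈ S → y d ∉ S) (hd : Even d)
    (hx : H.IsPathFun x m) (hdm : d ≤ m) (h0 : x 0 ∈ S) (hm : x m ∈ S) :
    d + 1 ≤ m ∧ x (d + 1) ∈ S := by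
  have hr := hx.reverse
  have hstep := cover_gap_add_two_mul (hr.mem_or_mem_succ hcov) (hr.not_mem_and_mem hpath)
    (i := 0) (by simpa using hm)
  obtain ⟨c, rfl⟩ := hd
  rcases Nat.even_or_odd' (m - (c + c)) with ⟨t, ht | ht⟩
  · have := hstep t (by omega)
    exact absurd ⟨h0, by rwa [show m - (0 + 2 * t) = 0 + (c + c) by omega] at this⟩
      (hx.not_mem_and_mem hpath 0 (by omega))
  · have := hstep t (by omega)
    exact ⟨by omega, by rwa [show m - (0 + 2 * t) = c + c + 1 by omega] at this⟩

theorem posaRotation (hx : H.IsPathFun x m) {j : ℕ} (hj : j ≤ m) (hadj : H.Adj (x 0) (x j)) :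
    H.IsPathFun (fun s => x (if s < j then j - 1 - s else s)) m := by
  refine hx.comp (fun s hs => by split_ifs <;> omega)
    (fun s hs t ht hst => by split_ifs at hst <;> omega) (fun s hs => ?_)
  by_cases hs' : s + 1 = j
  · right; right
    simpa [hs', show j - 1 - s = 0 by omega, show s < j by omega] using hadj
  · split_ifs <;> omega

/-- `x 0, …, x i, x m, x (m - 1), …, x (i + 1)`, a cycle through all of `x` when
`H.Adj (x 0) (x (i + 1))`. -/
theorem crossing (hx : H.IsPathFun x m) {i : ℕ} (hM : H.Adj (x m) (x i)) :
    H.IsPathFun (fun j => x (if j ≤ i then j else m + i + 1 - j)) m := by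
  refine hx.comp (fun s hs => by split_ifs <;> omega)
    (fun s hs t ht hst => by split_ifs at hst <;> omega) (fun s hs => ?_)
  by_cases hs' : s = i
  · right; right
    simpa [hs', show m + i + 1 - (i + 1) = m by omega] using hM.symm
  · split_ifs <;> omega

end IsPathFun

def walkOfAdj (x : ℕ → V) : (m : ℕ) → (∀ i < m, H.Adj (x i) (x (i + 1))) → H.Walk (x 0) (x m)
  | 0, _ => .nil
  | m + 1, h => (walkOfAdj x m fun i hi => h i (by omega)).concat (h m (by omega))

theorem support_walkOfAdj (x : ℕ → V) (m : ℕ) (h : ∀ i < m, H.Adj (x i) (x (i + 1))) :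
    (walkOfAdj x m h).support = (List.range (m + 1)).map x := by
  induction m with
  | zero => rfl
  | succ m ih => simp [walkOfAdj, Walk.support_concat, ih, List.range_succ (n := m + 1)]

theorem IsPathFun.exists_isCycle (hx : H.IsPathFun x m)
    (hclose : H.Adj (x m) (x 0)) (hm : 2 ≤ m) :
    ∃ (u : V) (w : H.Walk u u), w.IsCycle ∧ w.length = m + 1 := by
  have hsupp := support_walkOfAdj x m hx.1
  have hlen : (walkOfAdj x m hx.1).length = m := by
    simpa [hsupp] using ((walkOfAdj x m hx.1).length_support).symm
  have hpath : (walkOfAdj x m hx.1).IsPath := by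
    rw [Walk.isPath_def, hsupp]
    refine List.Nodup.map_on (fun i hi j hj hij => ?_) List.nodup_range
    simp only [List.mem_range] at hi hj
    exact hx.2 i (by omega) j (by omega) hij
  refine ⟨x m, .cons hclose (walkOfAdj x m hx.1),
    Walk.isCycle_iff_isPath_tail_and_le_length.2 ⟨by simpa using hpath, ?_⟩, ?_⟩
  · simp only [Walk.length_cons, hlen]; omega
  · simp [hlen]

theorem exists_isPathFun_maximal [Fintype V] (b₀ : V) :
    ∃ x M, H.IsPathFun x M ∧ H.Reachable b₀ (x 0) ∧
      ∀ y m, H.IsPathFun y m → H.Reachable b₀ (y 0) → m ≤ M := by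
  set P := {m | ∃ y, H.IsPathFun y m ∧ H.Reachable b₀ (y 0)}
  have hne : P.Nonempty :=
    ⟨0, fun _ => b₀, ⟨fun i hi => absurd hi (by omega), fun i hi j hj _ => by omega⟩, .rfl⟩
  have hbdd : BddAbove P := ⟨Fintype.card V, fun m ⟨y, hy, _⟩ => hy.lt_card.le⟩
  obtain ⟨x, hx, hxr⟩ := Nat.sSup_mem hne hbdd
  exact ⟨x, sSup P, hx, hxr, fun y m hy hyr => le_csSup hbdd ⟨y, hy, hyr⟩⟩

theorem IsPathFun.exists_eq_of_adj_of_maximal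
    (hmax : ∀ y m, H.IsPathFun y m → H.Reachable b₀ (y 0) → m ≤ M)
    (hy : H.IsPathFun y M) (hyr : H.Reachable b₀ (y 0)) {v : V} (hv : H.Adj (y 0) v) :
    ∃ j ∈ Icc 1 M, y j = v := by
  by_contra! hno
  have hnot : ∀ i ≤ M, y i ≠ v := fun i hi hiv => by
    rcases i with _ | i
    · exact hv.ne hiv
    · exact hno (i + 1) (by simp only [mem_Icc]; omega) hiv
  have := hmax _ _ (hy.cons hv.symm hnot) (by simpa using hyr.trans hv.reachable)
  omega

theorem IsPathFun.lt_of_adj (hcov : ∀ u v, H.Adj u v → u ∈ S ∨ v ∈ S)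
    (hpath : ∀ y, H.IsPathFun y d → y 0 ∈ S → y d ∉ S) (hd : Even d)
    (hy : H.IsPathFun y M) {j : ℕ} (hj : j ≤ M) (hadj : H.Adj (y 0) (y j)) : j < d := by
  by_contra! h
  exact (hy.window (i := 0) (l := j) (by omega)).not_adj_of_le hcov hpath hd h
    (by simpa using hadj.symm)

theorem degree_le_card_filter [Fintype V] [DecidableEq V] [DecidableRel H.Adj] {u : V}
    {I : Finset ℕ} (h : ∀ v, H.Adj u v → ∃ j ∈ I, y j = v) :
    H.degree u ≤ #(I.filter fun j => H.Adj u (y j)) := by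
  rw [← card_neighborFinset_eq_degree]
  refine (card_le_card fun v hv => ?_).trans (card_image_le (f := y))
  obtain ⟨j, hj, rfl⟩ := h v (by simpa using hv)
  exact mem_image.2 ⟨j, mem_filter.2 ⟨hj, by simpa using hv⟩, rfl⟩

section MaximalPath

variable [Fintype V] [DecidableEq V] [DecidableRel H.Adj]

theorem IsPathFun.degree_le_card_filter_Icc (hcov : ∀ u v, H.Adj u v → u ∈ S ∨ v ∈ S)
    (hpath : ∀ y, H.IsPathFun y d → y 0 ∈ S → y d ∉ S) (hd : Even d)
    (hmax : ∀ y m, H.IsPathFun y m → H.Reachable b₀ (y 0) → m ≤ M)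
    (hy : H.IsPathFun y M) (hyr : H.Reachable b₀ (y 0)) :
    H.degree (y 0) ≤ #((Icc 1 (d - 1)).filter fun j => H.Adj (y 0) (y j)) :=
  degree_le_card_filter fun v hv => by
    obtain ⟨j, hj, rfl⟩ := hy.exists_eq_of_adj_of_maximal hmax hyr hv
    have := hy.lt_of_adj hcov hpath hd (mem_Icc.1 hj).2 hv
    exact ⟨j, by simp only [mem_Icc] at hj ⊢; omega, rfl⟩

theorem IsPathFun.start_mem_of_maximal (hcov : ∀ u v, H.Adj u v → u ∈ S ∨ v ∈ S)
    (hpath : ∀ y, H.IsPathFun y d → y 0 ∈ S → y d ∉ S) (hd : Even d)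
    (hdeg : ∀ v, H.Reachable b₀ v → v ∉ S → d < H.degree v)
    (hmax : ∀ y m, H.IsPathFun y m → H.Reachable b₀ (y 0) → m ≤ M)
    (hy : H.IsPathFun y M) (hyr : H.Reachable b₀ (y 0)) : y 0 ∈ S := by
  by_contra hS
  have hle := (hy.degree_le_card_filter_Icc hcov hpath hd hmax hyr).trans (card_filter_le _ _)
  have := hdeg _ hyr hS
  simp only [Nat.card_Icc] at hle
  omega

theorem IsPathFun.not_adj_and_adj_succ (hcov : ∀ u v, H.Adj u v → u ∈ S ∨ v ∈ S)
    (hpath : ∀ y, H.IsPathFun y d → y 0 ∈ S → y d ∉ S) (hd : Even d)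
    (hdeg : ∀ v, H.Reachable b₀ v → v ∉ S → d < H.degree v)
    (hmax : ∀ y m, H.IsPathFun y m → H.Reachable b₀ (y 0) → m ≤ M)
    (hx : H.IsPathFun x M) (hxr : H.Reachable b₀ (x 0)) (hdM : d + 1 ≤ M) (hd1 : x (d + 1) ∈ S)
    {j : ℕ} (hj : 1 ≤ j) (hjd : j + 1 < d) : ¬(H.Adj (x 0) (x j) ∧ H.Adj (x 0) (x (j + 1))) := by
  rintro ⟨h1, h2⟩
  have hs : x (j - 1) ∈ S := by
    simpa [show 0 < j by omega] using
      (hx.posaRotation (by omega) h1).start_mem_of_maximal hcov hpath hd hdeg hmax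
        (by simpa [show 0 < j by omega] using hxr.trans (hx.reachable (i := j - 1) (by omega)))
  refine (hx.posaRotation (by omega) h2).not_mem_and_mem hpath 1 (by omega) ⟨?_, ?_⟩
  · simpa [show 0 < j by omega] using hs
  · simpa [show ¬ d < j by omega, add_comm] using hd1

/-- Every rotation of the cycle `x` is a longest path, so the cycle contains the neighbours of
its vertices and hence all of the component of `b₀`. -/
theorem IsPathFun.degree_le_of_maximal_of_adj
    (hmax : ∀ y m, H.IsPathFun y m → H.Reachable b₀ (y 0) → m ≤ M)
    (hz : H.IsPathFun x M) (hzc : H.Adj (x M) (x 0)) (hzr : H.Reachable b₀ (x 0)) :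
    H.degree b₀ ≤ M := by
  set rot : ℕ → ℕ → V := fun r s => x (if r + s ≤ M then r + s else r + s - (M + 1))
  have hrot : ∀ r ≤ M, H.IsPathFun (rot r) M := fun r hr => hz.rotate hzc le_rfl (by omega)
  have hrot0 : ∀ r ≤ M, rot r 0 = x r := fun r hr => by simp [rot, hr]
  have hrotr : ∀ r ≤ M, H.Reachable b₀ (rot r 0) := fun r hr =>
    hrot0 r hr ▸ hzr.trans (hz.reachable hr)
  have hnbr : ∀ r ≤ M, ∀ v, H.Adj (x r) v → ∃ j ∈ Icc 1 M, rot r j = v := fun r hr v hv =>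
    (hrot r hr).exists_eq_of_adj_of_maximal hmax (hrotr r hr) (by rwa [hrot0 r hr])
  obtain ⟨r, hr, rfl⟩ : ∃ r ≤ M, x r = b₀ := by
    by_contra h
    obtain ⟨p⟩ := hzr.symm
    obtain ⟨e, -, ⟨r, hr, he⟩, hout⟩ :=
      p.exists_boundary_dart {v | ∃ r ≤ M, x r = v} ⟨0, by omega, rfl⟩ h
    obtain ⟨j, hjM, hj⟩ := hnbr r hr _ (he ▸ e.adj)
    exact hout ⟨_, by simp only [mem_Icc] at hjM; split_ifs <;> omega, hj⟩
  calc H.degree (x r) ≤ #((Icc 1 M).filter fun j => H.Adj (x r) (rot r j)) :=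
        degree_le_card_filter (hnbr r hr)
    _ ≤ M := (card_filter_le _ _).trans (by simp)

theorem IsPathFun.le_of_maximal (hdeg : ∀ v, H.Reachable b₀ v → d < 2 * H.degree v)
    (hb₀ : d < H.degree b₀) (hmax : ∀ y m, H.IsPathFun y m → H.Reachable b₀ (y 0) → m ≤ M)
    (hx : H.IsPathFun x M) (hxr : H.Reachable b₀ (x 0)) : d ≤ M := by
  -- If `M < d`, the neighbourhoods of the two ends cross and the path closes up to a cycle.
  by_contra! hM
  have hxMr : H.Reachable b₀ (x M) := hxr.trans (hx.reachable le_rfl)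
  have hA : H.degree (x 0) ≤ #((range M).filter fun i => H.Adj (x 0) (x (i + 1))) :=
    degree_le_card_filter (y := fun i => x (i + 1)) fun v hv => by
      obtain ⟨j, hj, rfl⟩ := hx.exists_eq_of_adj_of_maximal hmax hxr hv
      simp only [mem_Icc] at hj
      exact ⟨j - 1, by simp only [mem_range]; omega, by rw [Nat.sub_add_cancel hj.1]⟩
  have hB : H.degree (x M) ≤ #((range M).filter fun i => H.Adj (x M) (x i)) :=
    degree_le_card_filter (y := x) fun v hv => by
      obtain ⟨j, hj, rfl⟩ := hx.reverse.exists_eq_of_adj_of_maximal hmax (by simpa using hxMr)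
        (by simpa using hv)
      simp only [mem_Icc] at hj
      exact ⟨M - j, by simp only [mem_range]; omega, rfl⟩
  obtain ⟨i, hi⟩ := inter_nonempty_of_card_lt_card_add_card
    (filter_subset (fun i => H.Adj (x 0) (x (i + 1))) (range M))
    (filter_subset (fun i => H.Adj (x M) (x i)) _)
    (by have := hdeg _ hxr; have := hdeg _ hxMr; simp only [card_range]; omega)
  simp only [mem_inter, mem_filter, mem_range] at hi
  have hz := hx.crossing hi.2.2
  have := hz.degree_le_of_maximal_of_adj hmax
    (by simpa [show ¬ M ≤ i by omega, add_assoc] using hi.1.2.symm) (by simpa using hxr)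
  omega

theorem exists_isPathFun_mem_mem (hd : Even d) (hcov : ∀ u v, H.Adj u v → u ∈ S ∨ v ∈ S)
    (hdegS : ∀ v, H.Reachable b₀ v → v ∈ S → d < 2 * H.degree v)
    (hdegT : ∀ v, H.Reachable b₀ v → v ∉ S → d < H.degree v) (hb₀ : d < H.degree b₀) :
    ∃ y, H.IsPathFun y d ∧ y 0 ∈ S ∧ y d ∈ S := by
  by_contra! hpath
  obtain ⟨x, M, hx, hxr, hmax⟩ := exists_isPathFun_maximal (H := H) b₀
  have hdM : d ≤ M := hx.le_of_maximal (fun v hv => by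
    by_cases hS : v ∈ S
    · exact hdegS v hv hS
    · have := hdegT v hv hS; omega) hb₀ hmax hxr
  have h0 : x 0 ∈ S := hx.start_mem_of_maximal hcov hpath hd hdegT hmax hxr
  have hM : x M ∈ S := by
    simpa using hx.reverse.start_mem_of_maximal hcov hpath hd hdegT hmax
      (by simpa using hxr.trans (hx.reachable le_rfl))
  obtain ⟨hd1M, hd1⟩ := hx.mem_succ_of_mem_of_mem hcov hpath hd hdM h0 hM
  have hA := card_le_of_forall_succ_notMem
    (filter_subset (fun j => H.Adj (x 0) (x j)) (Icc 1 (d - 1))) fun j hj hj1 => by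
      simp only [mem_filter, mem_Icc] at hj hj1
      exact hx.not_adj_and_adj_succ hcov hpath hd hdegT hmax hxr hd1M hd1 hj.1.1 (by omega)
        ⟨hj.2, hj1.2⟩
  have := (hx.degree_le_card_filter_Icc hcov hpath hd hmax hxr).trans hA
  have := hdegS _ hxr h0
  omega

end MaximalPath

def incidentToNeighbors (G : SimpleGraph V) (a : V) : SimpleGraph V where
  Adj u v := G.Adj u v ∧ u ≠ a ∧ v ≠ a ∧ (G.Adj a u ∨ G.Adj a v)
  symm := ⟨fun _ _ h => ⟨h.1.symm, h.2.2.1, h.2.1, h.2.2.2.symm⟩⟩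
  loopless := ⟨fun _ h => G.irrefl h.1⟩

theorem incidentToNeighbors_adj {a u v : V} : (G.incidentToNeighbors a).Adj u v ↔
    G.Adj u v ∧ u ≠ a ∧ v ≠ a ∧ (G.Adj a u ∨ G.Adj a v) :=
  Iff.rfl

theorem incidentToNeighbors_le (a : V) : G.incidentToNeighbors a ≤ G := fun _ _ h => h.1

section Finite

variable [Fintype V] [DecidableEq V] [DecidableRel G.Adj]

theorem card_inter_neighborFinset_le_deleteIncidenceSet {a b c : V} (hba : b ≠ a) (hcb : c ≠ b) :
    #(G.neighborFinset a ∩ G.neighborFinset c) ≤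
      #((G.deleteIncidenceSet b).neighborFinset a ∩ (G.deleteIncidenceSet b).neighborFinset c) +
        if G.Adj a b ∧ G.Adj c b then 1 else 0 := by
  have hsub : (G.neighborFinset a ∩ G.neighborFinset c).erase b ⊆
      (G.deleteIncidenceSet b).neighborFinset a ∩ (G.deleteIncidenceSet b).neighborFinset c :=
    fun v hv => by
      simp only [mem_erase, mem_inter, mem_neighborFinset, deleteIncidenceSet_adj] at hv ⊢
      exact ⟨⟨hv.2.1, hba.symm, hv.1⟩, hv.2.2, hcb, hv.1⟩
  have hmem : b ∈ G.neighborFinset a ∩ G.neighborFinset c ↔ G.Adj a b ∧ G.Adj c b := by simp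
  calc #(G.neighborFinset a ∩ G.neighborFinset c)
      ≤ #((G.neighborFinset a ∩ G.neighborFinset c).erase b) +
          if G.Adj a b ∧ G.Adj c b then 1 else 0 := by
        split_ifs with h
        · exact (card_erase_add_one (hmem.2 h)).ge
        · rw [erase_eq_of_notMem (mt hmem.1 h), add_zero]
    _ ≤ _ := by gcongr

theorem sum_card_inter_le_deleteIncidenceSet {a b : V} (hba : b ≠ a) :
    ∑ c ∈ univ.erase a, #(G.neighborFinset a ∩ G.neighborFinset c) ≤
      ∑ c ∈ univ.erase a,
          #((G.deleteIncidenceSet b).neighborFinset a ∩ (G.deleteIncidenceSet b).neighborFinset c) +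
        (#(G.neighborFinset a ∩ G.neighborFinset b) + if G.Adj a b then G.degree b - 1 else 0) := by
  have hb : b ∈ univ.erase a := by simpa using hba
  have hmid : ∑ c ∈ (univ.erase a).erase b, (if G.Adj a b ∧ G.Adj c b then 1 else 0) ≤
      if G.Adj a b then G.degree b - 1 else 0 := by
    split_ifs with hab
    · rw [sum_boole, Nat.cast_id, ← card_neighborFinset_eq_degree,
        ← card_erase_of_mem ((mem_neighborFinset _ _ _).2 hab.symm)]
      refine card_le_card fun c hc => ?_
      simp only [mem_filter, mem_erase, mem_univ, mem_neighborFinset] at hc ⊢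
      exact ⟨hc.1.2.1, hc.2.2.symm⟩
    · simp [hab]
  have hrest := sum_le_sum_of_subset (erase_subset b (univ.erase a)) (f := fun c =>
    #((G.deleteIncidenceSet b).neighborFinset a ∩ (G.deleteIncidenceSet b).neighborFinset c))
  calc ∑ c ∈ univ.erase a, #(G.neighborFinset a ∩ G.neighborFinset c)
      ≤ #(G.neighborFinset a ∩ G.neighborFinset b) + ∑ c ∈ (univ.erase a).erase b,
          (#((G.deleteIncidenceSet b).neighborFinset a ∩
              (G.deleteIncidenceSet b).neighborFinset c) +
            if G.Adj a b ∧ G.Adj c b then 1 else 0) := by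
        rw [← add_sum_erase _ _ hb]
        gcongr with c hc
        exact card_inter_neighborFinset_le_deleteIncidenceSet hba (ne_of_mem_erase hc)
    _ ≤ _ := by rw [sum_add_distrib]; omega

theorem card_filter_degree_pos_deleteIncidenceSet_lt {a b : V} (hba : b ≠ a)
    (hb : 0 < G.degree b) :
    #((univ.erase a).filter fun c => 0 < (G.deleteIncidenceSet b).degree c) <
      #((univ.erase a).filter fun c => 0 < G.degree c) := by
  refine card_lt_card ((ssubset_iff_of_subset fun c hc => ?_).2 ⟨b, ?_, fun hb' => ?_⟩)
  · simp only [mem_filter, degree_pos_iff_exists_adj, deleteIncidenceSet_adj] at hc ⊢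
    exact ⟨hc.1, hc.2.imp fun _ h => h.1⟩
  · simpa [hba] using hb
  · simp [degree_pos_iff_exists_adj, deleteIncidenceSet_adj] at hb'

variable {a : V}

theorem card_inter_le_degree_incidentToNeighbors [DecidableRel (G.incidentToNeighbors a).Adj]
    {w : V} (hw : w ≠ a) :
    #(G.neighborFinset a ∩ G.neighborFinset w) ≤ (G.incidentToNeighbors a).degree w := by
  rw [← card_neighborFinset_eq_degree]
  refine card_le_card fun v hv => ?_
  simp only [mem_inter, mem_neighborFinset, incidentToNeighbors_adj] at hv ⊢
  exact ⟨hv.2, hw, hv.1.ne', Or.inr hv.1⟩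

theorem degree_incidentToNeighbors_of_adj [DecidableRel (G.incidentToNeighbors a).Adj]
    {v : V} (hv : G.Adj a v) :
    (G.incidentToNeighbors a).degree v = G.degree v - 1 := by
  rw [← card_neighborFinset_eq_degree, ← card_neighborFinset_eq_degree,
    ← card_erase_of_mem ((mem_neighborFinset _ _ _).2 hv.symm)]
  congr 1
  ext u
  simp only [mem_neighborFinset, mem_erase, incidentToNeighbors_adj]
  exact ⟨fun h => ⟨h.2.2.1, h.1⟩, fun h => ⟨h.2, hv.ne', h.1, Or.inl hv⟩⟩

theorem card_inter_le_of_forall_le {k : ℕ} (hk : 2 ≤ k)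
    (hfree : ∀ x, G.IsPathFun x (2 * k - 1) → ¬G.Adj (x (2 * k - 1)) (x 0))
    (hrich : ∀ b ≠ a, 0 < G.degree b →
      2 * k - 1 ≤ #(G.neighborFinset a ∩ G.neighborFinset b) +
        if G.Adj a b then G.degree b - 1 else 0)
    {b : V} (hba : b ≠ a) : #(G.neighborFinset a ∩ G.neighborFinset b) ≤ 2 * k - 2 := by
  classical
  by_contra! hbig
  have hb : 2 * k - 2 < (G.incidentToNeighbors a).degree b :=
    hbig.trans_le (card_inter_le_degree_incidentToNeighbors hba)
  have hdegS : ∀ v, (G.incidentToNeighbors a).Reachable b v → G.Adj a v →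
      2 * k - 2 < 2 * (G.incidentToNeighbors a).degree v := fun v _ hv => by
    have h1 := hrich v hv.ne' ((G.degree_pos_iff_exists_adj v).2 ⟨a, hv.symm⟩)
    have h2 := card_inter_le_degree_incidentToNeighbors (G := G) hv.ne'
    have h3 := degree_incidentToNeighbors_of_adj hv
    rw [if_pos hv] at h1
    omega
  have hdegT : ∀ v, (G.incidentToNeighbors a).Reachable b v → ¬G.Adj a v →
      2 * k - 2 < (G.incidentToNeighbors a).degree v := fun v hrv hv => by
    obtain ⟨w, hw⟩ : ∃ w, (G.incidentToNeighbors a).Adj v w := by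
      by_cases hvb : v = b
      · exact hvb ▸ ((G.incidentToNeighbors a).degree_pos_iff_exists_adj b).1 (by omega)
      · exact (mem_support _).1 (mem_support_of_reachable hvb hrv.symm)
    rw [incidentToNeighbors_adj] at hw
    have h1 := hrich v hw.2.1 ((G.degree_pos_iff_exists_adj v).2 ⟨w, hw.1⟩)
    have h2 := card_inter_le_degree_incidentToNeighbors (G := G) hw.2.1
    rw [if_neg hv] at h1
    omega
  obtain ⟨y, hy, hy0, hyd⟩ := exists_isPathFun_mem_mem (S := {v | G.Adj a v}) ⟨k - 1, by omega⟩
    (fun u v h => (incidentToNeighbors_adj.1 h).2.2.2) hdegS hdegT hb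
  have hya : ∀ i ≤ 2 * k - 2, y i ≠ a := fun i hi => by
    rcases Nat.lt_or_ge i (2 * k - 2) with h | h
    · exact (incidentToNeighbors_adj.1 (hy.1 i h)).2.1
    · simpa [show i - 1 + 1 = i by omega] using
        (incidentToNeighbors_adj.1 (hy.1 (i - 1) (by omega))).2.2.1
  have hcyc := (hy.mono (incidentToNeighbors_le a)).cons hy0 hya
  rw [show 2 * k - 2 + 1 = 2 * k - 1 by omega] at hcyc
  refine hfree _ hcyc ?_
  simpa [show 2 * k - 1 ≠ 0 by omega, show 2 * k - 1 - 1 = 2 * k - 2 by omega] using hyd.symm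

theorem sum_card_inter_le {k : ℕ} (hk : 2 ≤ k)
    (hfree : ∀ x, G.IsPathFun x (2 * k - 1) → ¬G.Adj (x (2 * k - 1)) (x 0)) :
    ∑ b ∈ univ.erase a, #(G.neighborFinset a ∩ G.neighborFinset b) ≤
      (2 * k - 2) * #((univ.erase a).filter fun b => 0 < G.degree b) := by
  induction hn : #((univ.erase a).filter fun b => 0 < G.degree b) using Nat.strong_induction_on
    generalizing G with
  | _ n ih =>
    by_cases hpeel : ∃ b ≠ a, 0 < G.degree b ∧ #(G.neighborFinset a ∩ G.neighborFinset b) +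
        (if G.Adj a b then G.degree b - 1 else 0) ≤ 2 * k - 2
    · obtain ⟨b, hba, hb, hcost⟩ := hpeel
      have hlt := hn ▸ card_filter_degree_pos_deleteIncidenceSet_lt hba hb
      have hG' := ih _ hlt (G := G.deleteIncidenceSet b)
        (fun x hx h => hfree x (hx.mono (deleteIncidenceSet_le G b)) (deleteIncidenceSet_le G b h))
        rfl
      have hsum := sum_card_inter_le_deleteIncidenceSet (G := G) hba
      have hmul := Nat.mul_le_mul_left (2 * k - 2) (Nat.succ_le_of_lt hlt)
      rw [Nat.mul_succ] at hmul
      omega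
    · simp only [not_exists, not_and, not_le] at hpeel
      have hle : ∀ b ∈ univ.erase a, #(G.neighborFinset a ∩ G.neighborFinset b) ≤ 2 * k - 2 :=
        fun b hb => card_inter_le_of_forall_le hk hfree (fun c hca hc => by
          have := hpeel c hca hc; omega) (ne_of_mem_erase hb)
      rw [← hn, ← sum_filter_of_ne (p := fun b => 0 < G.degree b) fun b _ h => ?_]
      · calc _ ≤ #((univ.erase a).filter fun b => 0 < G.degree b) • (2 * k - 2) :=
              sum_le_card_nsmul _ _ _ fun b hb => hle b (mem_filter.1 hb).1
          _ = _ := by rw [smul_eq_mul, mul_comm]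
      · obtain ⟨v, hv⟩ := card_ne_zero.1 h
        exact (G.degree_pos_iff_exists_adj b).2 ⟨v, by simpa using (mem_inter.1 hv).2⟩

end Finite

end SimpleGraph

/-- In a `C_{2k}`-free graph on `n` vertices, for every vertex `a`, the number of paths with
3 vertices starting at `a` satisfies `∑_{b ≠ a} f(a,b) ≤ (2k-2)·n`, where `f(a,b)` is the
number of common neighbors of `a` and `b`. -/
theorem stmt_2 {V : Type*} [Fintype V] [DecidableEq V] (G : SimpleGraph V)
    [DecidableRel G.Adj] (k : ℕ) (hk : 2 ≤ k)
    (hfree : ∀ (v : V) (w : G.Walk v v), w.IsCycle → w.length ≠ 2 * k) (a : V) :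
    ∑ b ∈ Finset.univ.erase a, ((G.neighborFinset a) ∩ (G.neighborFinset b)).card
      ≤ (2 * k - 2) * Fintype.card V := by
  have hfree' : ∀ x, G.IsPathFun x (2 * k - 1) → ¬G.Adj (x (2 * k - 1)) (x 0) := fun x hx hc => by
    obtain ⟨u, w, hw, hlen⟩ := hx.exists_isCycle hc (by omega)
    exact hfree u w hw (by omega)
  calc _ ≤ (2 * k - 2) * #((univ.erase a).filter fun b => 0 < G.degree b) :=
        sum_card_inter_le hk hfree'
    _ ≤ (2 * k - 2) * Fintype.card V := by gcongr; exact card_le_univ _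
end

section
/- Let G be a C_{2k}-free simple graph (k ≥ 2) and let a be a vertex of G. Let E_1 be the set of edges of G with both endpoints adjacent to a, and E_2 the set of edges uv of G with u adjacent to a and v at distance exactly 2 from a. Then the graph formed by the edges E_1 ∪ E_2 contains no cycle of length greater than 2k-2. -/
/-!
Every edge of a cycle `C` of `E₁ ∪ E₂` has an endpoint in `N(a)`, and `a ∉ C`. Indexing the
vertices of `C` periodically, no two consecutive ones miss `N(a)`, and this alone forces two
vertices of `N(a)` at distance `2k - 2` along `C`. If `C` had length at least `2k - 1`, the arc
of `C` joining them, closed up through `a`, would be a `2k`-cycle of `G`.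
-/

open SimpleGraph

theorem Nat.exists_and_add_two_mul {P : ℕ → Prop} (hP : ∀ m, P m ∨ P (m + 1)) (e : ℕ) :
    ∃ x, P x ∧ P (x + 2 * e) := by
  obtain ⟨x₀, hx₀⟩ : ∃ x, P x := (hP 0).elim (⟨0, ·⟩) (⟨1, ·⟩)
  rcases Nat.eq_zero_or_pos e with rfl | he
  · exact ⟨x₀, hx₀, hx₀⟩
  by_contra! hno
  have iterate : ∀ d, (∀ x, P x → P (x + d)) → ∀ j x, P x → P (x + j * d) := by
    intro d hd j
    induction j with
    | zero => intro x hx; simpa using hx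
    | succ j ih => intro x hx; simpa [add_mul, ← add_assoc] using hd _ (ih x hx)
  -- If `P x` then `¬ P (x + 2e)`, so both neighbours `x + 2e ∓ 1` satisfy `P`.
  have step_sub : ∀ x, P x → P (x + (2 * e - 1)) := fun x hx =>
    (hP _).resolve_right (by rw [add_assoc, Nat.sub_add_cancel (by omega)]; exact hno x hx)
  have step_add : ∀ x, P x → P (x + (2 * e + 1)) := fun x hx =>
    (hP _).resolve_left (hno x hx)
  -- `e` steps of `2e + 1` overshoot `e` steps of `2e - 1` by exactly `2e`.
  have hshift : x₀ + e * (2 * e - 1) + 2 * e = x₀ + e * (2 * e + 1) := by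
    zify [show 1 ≤ 2 * e by omega]
    ring
  exact hno _ (iterate _ step_sub e x₀ hx₀) (hshift ▸ iterate _ step_add e x₀ hx₀)

namespace SimpleGraph.Walk

variable {V : Type*} {G : SimpleGraph V}

theorem exists_walk_support_eq_map_range (f : ℕ → V) (n : ℕ)
    (hf : ∀ m < n, G.Adj (f m) (f (m + 1))) :
    ∃ p : G.Walk (f 0) (f n), p.length = n ∧ p.support = (List.range (n + 1)).map f := by
  have hne : (List.range (n + 1)).map f ≠ [] := by simp
  have hchain : ((List.range (n + 1)).map f).IsChain G.Adj :=
    (List.isChain_map f).2 ((List.isChain_range_succ _ n).2 hf)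
  exact ⟨(ofSupport _ hne hchain).copy (by simp [List.head_map]) (by simp [List.getLast_map]),
    by simp, by simp⟩

theorem IsPath.isCycle_cons_concat {a x y : V} {p : G.Walk x y} (hp : p.IsPath)
    (ha : a ∉ p.support) (hax : G.Adj a x) (hya : G.Adj y a) (hl : p.length ≠ 0) :
    (cons hax (p.concat hya)).IsCycle := by
  simp only [isCycle_iff_isPath_tail_and_le_length, getVert_cons_succ, tail_cons, isPath_copy,
    concat_isPath_iff, length_cons, length_concat]
  exact ⟨⟨hp, ha⟩, by omega⟩

variable {u : V}

def cycleVert (c : G.Walk u u) (m : ℕ) : V := c.getVert (m % c.length)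

theorem cycleVert_succ {c : G.Walk u u} (hc : c.length ≠ 0) (m : ℕ) :
    c.cycleVert (m + 1) = c.getVert (m % c.length + 1) := by
  rw [cycleVert, ← Nat.mod_add_mod]
  have hlt : m % c.length + 1 ≤ c.length := Nat.mod_lt m (Nat.pos_of_ne_zero hc)
  obtain h | h := hlt.lt_or_eq
  · rw [Nat.mod_eq_of_lt h]
  · rw [h, Nat.mod_self, getVert_zero, getVert_length]

theorem mk_cycleVert_mem_edges {c : G.Walk u u} (hc : c.length ≠ 0) (m : ℕ) :
    s(c.cycleVert m, c.cycleVert (m + 1)) ∈ c.edges :=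
  c.mk_mem_edges_iff_exists.2
    ⟨_, Nat.mod_lt m (Nat.pos_of_ne_zero hc), by rw [cycleVert_succ hc]; rfl⟩

theorem IsCycle.cycleVert_add_injOn {c : G.Walk u u} (hc : c.IsCycle) (i : ℕ) :
    Set.InjOn (fun m => c.cycleVert (i + m)) (Set.Iio c.length) := by
  intro m hm m' hm' h
  have hℓ : 0 < c.length := Nat.zero_lt_of_lt hm
  have hmod := hc.getVert_injOn' (Nat.le_sub_one_of_lt (Nat.mod_lt _ hℓ))
    (Nat.le_sub_one_of_lt (Nat.mod_lt _ hℓ)) h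
  exact (Nat.ModEq.add_left_cancel' i hmod).eq_of_lt_of_lt hm hm'

theorem IsCycle.exists_isPath_cycleVert {c : G.Walk u u} (hc : c.IsCycle) (i : ℕ) {n : ℕ}
    (hn : n < c.length) :
    ∃ p : G.Walk (c.cycleVert i) (c.cycleVert (i + n)),
      p.IsPath ∧ p.length = n ∧ p.support ⊆ c.support := by
  obtain ⟨p, hlen, hsupp⟩ := exists_walk_support_eq_map_range (fun m => c.cycleVert (i + m)) n
    fun m _ => c.adj_of_mem_edges (mk_cycleVert_mem_edges (by omega) (i + m))
  refine ⟨p, ?_, hlen, ?_⟩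
  · rw [isPath_def, hsupp]
    have hlt : ∀ m ∈ List.range (n + 1), m < c.length := fun m hm => by
      have := List.mem_range.1 hm; omega
    exact List.nodup_range.map_on fun m hm m' hm' h =>
      hc.cycleVert_add_injOn i (hlt m hm) (hlt m' hm') h
  · rw [hsupp]
    intro _ hx
    obtain ⟨m, -, rfl⟩ := List.mem_map.1 hx
    exact c.getVert_mem_support _

theorem IsCycle.exists_isCycle_length_eq_two_mul_add_two {c : G.Walk u u} (hc : c.IsCycle)
    {a : V} (ha : a ∉ c.support) (hcover : ∀ x y, s(x, y) ∈ c.edges → G.Adj a x ∨ G.Adj a y)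
    {e : ℕ} (he : e ≠ 0) (hlen : 2 * e < c.length) :
    ∃ d : G.Walk a a, d.IsCycle ∧ d.length = 2 * e + 2 := by
  obtain ⟨x, hx, hx'⟩ := Nat.exists_and_add_two_mul
    (fun m => hcover _ _ (mk_cycleVert_mem_edges (by omega) m)) e
  obtain ⟨p, hp, hplen, hsupp⟩ := hc.exists_isPath_cycleVert x hlen
  exact ⟨_, hp.isCycle_cons_concat (fun h => ha (hsupp h)) hx hx'.symm (by omega),
    by simp [hplen]⟩

theorem exists_adj_of_mem_support_of_not_nil {v x : V} {p : G.Walk u v} (hp : ¬p.Nil)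
    (hx : x ∈ p.support) : ∃ y, G.Adj x y := by
  obtain ⟨e, he, hxe⟩ := (mem_support_iff_exists_mem_edges_of_not_nil hp).1 hx
  obtain ⟨y, rfl⟩ := Sym2.mem_iff_exists.1 hxe
  exact ⟨y, p.adj_of_mem_edges he⟩

theorem IsCycle.exists_isCycle_length_eq_of_le {H : SimpleGraph V} {c : H.Walk u u}
    (hc : c.IsCycle) (hHG : H ≤ G) {a : V} (haH : ∀ x, ¬H.Adj a x)
    (hcover : ∀ x y, H.Adj x y → G.Adj a x ∨ G.Adj a y) {e : ℕ} (he : e ≠ 0)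
    (hlen : 2 * e < c.length) :
    ∃ d : G.Walk a a, d.IsCycle ∧ d.length = 2 * e + 2 := by
  refine (hc.mapLe hHG).exists_isCycle_length_eq_two_mul_add_two ?_ ?_ he (by simpa using hlen)
  · rw [support_mapLe_eq_support]
    intro ha
    obtain ⟨x, hx⟩ := exists_adj_of_mem_support_of_not_nil hc.not_nil ha
    exact haH x hx
  · intro x y hxy
    rw [edges_mapLe_eq_edges] at hxy
    exact hcover x y (c.adj_of_mem_edges hxy)

end SimpleGraph.Walk

/-- Let `G` be `C_{2k}`-free (`k ≥ 2`) and `a` a vertex. The graph formed by the edges of `G`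
with both endpoints adjacent to `a` (`E₁`), together with the edges of `G` with one endpoint
adjacent to `a` and the other at distance exactly 2 from `a` (`E₂`), contains no cycle of
length greater than `2k - 2`. -/
theorem stmt_3 {V : Type*} (G : SimpleGraph V) (k : ℕ) (hk : 2 ≤ k)
    (hfree : ∀ (v : V) (w : G.Walk v v), w.IsCycle → w.length ≠ 2 * k) (a : V) :
    ∀ (v : V)
      (w : (SimpleGraph.fromRel
        (fun u x => G.Adj u x ∧ G.Adj a u ∧ (G.Adj a x ∨ G.dist a x = 2))).Walk v v),
      w.IsCycle → w.length ≤ 2 * k - 2 := by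
  intro v w hw
  by_contra! hlen
  obtain ⟨d, hd, hdlen⟩ := hw.exists_isCycle_length_eq_of_le (a := a) (e := k - 1)
    (fun u x h => ((fromRel_adj _ _ _).1 h).2.elim (·.1) (·.1.symm))
    (fun x h => by
      obtain ⟨-, ⟨-, h, -⟩ | ⟨-, -, h | h⟩⟩ := (fromRel_adj _ _ _).1 h
      · exact h.ne rfl
      · exact h.ne rfl
      · simp at h)
    (fun u x h => ((fromRel_adj _ _ _).1 h).2.imp (·.2.1) (·.2.1)) (by omega) (by omega)
  exact hfree a d hd (by omega)
end

section
/- Let A be a set of integers each at least 3, let A_e be the even members of A, and suppose 2k ∉ A. Then ex(n, C_{2k}, 𝒞_A) ≥ (1/2^{2k-1}) · ex(n, C_{2k}, 𝒞_{A_e}), where 𝒞_S = {C_a : a ∈ S}. (Hence ex(n,C_{2k},𝒞_A) = Θ(ex(n,C_{2k},𝒞_{A_e})).) -/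
open SimpleGraph

/-- The number of copies of a graph `H` in `G`: subgraphs of `G` isomorphic to `H`. -/
noncomputable def copyCount {α β : Type*} (H : SimpleGraph α) (G : SimpleGraph β) : ℕ :=
  Nat.card {G' : G.Subgraph // Nonempty (H ≃g G'.coe)}

/-- `G` contains no cycle of length `m`. -/
def CycleFreeOf {β : Type*} (G : SimpleGraph β) (m : ℕ) : Prop :=
  ∀ (v : β) (w : G.Walk v v), w.IsCycle → w.length ≠ m

/-- `ex(n, C_m, 𝒞_A)`: the maximum number of copies of `C_m` over graphs on `n` vertices
containing no cycle of length `a` for any `a ∈ A`. -/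
noncomputable def exFam (n m : ℕ) (A : Set ℕ) : ℕ :=
  sSup {c | ∃ G : SimpleGraph (Fin n),
    (∀ a ∈ A, CycleFreeOf G a) ∧ c = _root_.copyCount (cycleGraph m) G}

/-!
Colour the vertices of a graph `G` with no even cycle of length in `A` by a random
`f : V → Bool` and keep only the edges whose endpoints get different colours. The resulting
bipartite graph has no odd cycles at all, and none of the even ones `G` avoids, so it has no
cycle of length in `A`. A fixed copy of `C_{2k}` survives exactly when `f` properly
`2`-colours it, which happens for at least `2 ^ (n - 2k + 1)` of the `2 ^ n` colourings.
Averaging over `f` gives a cut with at least `2 ^ (1 - 2k)` times as many copies as `G`.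
-/

open Finset

variable {α V : Type*}

def SimpleGraph.cut (G : SimpleGraph V) (f : V → Bool) : SimpleGraph V :=
  G ⊓ (⊤ : SimpleGraph Bool).comap f

lemma SimpleGraph.cut_le (G : SimpleGraph V) (f : V → Bool) : G.cut f ≤ G :=
  inf_le_left

def SimpleGraph.cutColoring (G : SimpleGraph V) (f : V → Bool) :
    (G.cut f).Coloring Bool :=
  Coloring.mk f fun h => h.2

lemma CycleFreeOf.anti {G H : SimpleGraph V} (hle : H ≤ G) {m : ℕ}
    (hG : CycleFreeOf G m) : CycleFreeOf H m :=
  fun v w hw => by simpa using hG v (w.mapLe hle) (hw.mapLe hle)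

lemma SimpleGraph.Coloring.cycleFreeOf_of_odd {G : SimpleGraph V}
    (c : G.Coloring Bool) {m : ℕ} (hm : Odd m) : CycleFreeOf G m := by
  rintro v w - rfl
  exact Nat.not_even_iff_odd.mpr hm ((c.even_length_iff_congr w).mpr Iff.rfl)

lemma SimpleGraph.cycleFreeOf_cut {G : SimpleGraph V} {A : Set ℕ}
    (hG : ∀ a ∈ {a | a ∈ A ∧ Even a}, CycleFreeOf G a) (f : V → Bool) :
    ∀ a ∈ A, CycleFreeOf (G.cut f) a := by
  intro a ha
  rcases Nat.even_or_odd a with heven | hodd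
  · exact (hG a ⟨ha, heven⟩).anti (G.cut_le f)
  · exact (G.cutColoring f).cycleFreeOf_of_odd hodd

def SimpleGraph.Subgraph.codRestrict {G G' : SimpleGraph V} (K : G.Subgraph)
    (h : ∀ ⦃u v⦄, K.Adj u v → G'.Adj u v) : G'.Subgraph where
  verts := K.verts
  Adj := K.Adj
  adj_sub := @h
  edge_vert := K.edge_vert
  symm := K.symm

lemma SimpleGraph.Subgraph.codRestrict_inj {G G' : SimpleGraph V}
    {K L : G.Subgraph} {hK : ∀ ⦃u v⦄, K.Adj u v → G'.Adj u v}
    {hL : ∀ ⦃u v⦄, L.Adj u v → G'.Adj u v} (h : K.codRestrict hK = L.codRestrict hL) :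
    K = L :=
  Subgraph.ext (congrArg (fun K : G'.Subgraph => K.verts) h)
    (congrArg (fun K : G'.Subgraph => K.Adj) h)

lemma card_copies_of_adj_le_copyCount [Finite V] (H : SimpleGraph α)
    (G G' : SimpleGraph V) :
    Nat.card {K : G.Subgraph // Nonempty (H ≃g K.coe) ∧ ∀ ⦃u v⦄, K.Adj u v → G'.Adj u v} ≤
      _root_.copyCount H G' :=
  Nat.card_le_card_of_injective (fun K => ⟨K.1.codRestrict K.2.2, K.2.1⟩)
    fun _ _ h => Subtype.ext (Subgraph.codRestrict_inj (Subtype.mk.inj h))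

open scoped Classical in
lemma card_copies_properlyColored_le_copyCount_cut [Fintype V] (H : SimpleGraph α)
    (G : SimpleGraph V) (f : V → Bool) :
    #{K : G.Subgraph | Nonempty (H ≃g K.coe) ∧ ∀ ⦃u v⦄, K.Adj u v → f u ≠ f v} ≤
      _root_.copyCount H (G.cut f) :=
  calc #{K : G.Subgraph | Nonempty (H ≃g K.coe) ∧ ∀ ⦃u v⦄, K.Adj u v → f u ≠ f v}
      = Nat.card {K : G.Subgraph //
          Nonempty (H ≃g K.coe) ∧ ∀ ⦃u v⦄, K.Adj u v → (G.cut f).Adj u v} := by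
        rw [Nat.card_eq_fintype_card, Fintype.card_subtype]
        exact congrArg card (filter_congr fun K _ => and_congr_right fun _ =>
          forall₂_congr fun _ _ =>
            ⟨fun h huv => ⟨K.adj_sub huv, h huv⟩, fun h huv => (h huv).2⟩)
    _ ≤ _root_.copyCount H (G.cut f) := card_copies_of_adj_le_copyCount H G _

-- The colourings `b xor c` on `K`, arbitrary elsewhere, are all proper on `K`.
open scoped Classical in
lemma two_pow_card_le_card_properColorings [Fintype V] {G : SimpleGraph V}
    (K : G.Subgraph) (c : K.coe.Coloring Bool) {v₀ : V} (hv₀ : v₀ ∈ K.verts) :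
    2 ^ Fintype.card V ≤
      2 ^ (Fintype.card K.verts - 1) * #{f : V → Bool | ∀ ⦃u v⦄, K.Adj u v → f u ≠ f v} := by
  let φ : Bool × (↥K.vertsᶜ → Bool) → V → Bool := fun p x =>
    if hx : x ∈ K.verts then xor p.1 (c ⟨x, hx⟩) else p.2 ⟨x, hx⟩
  have hproper : ∀ p, ∀ ⦃u v⦄, K.Adj u v → φ p u ≠ φ p v := by
    intro p u v huv
    simp only [φ, dif_pos (K.edge_vert huv), dif_pos (K.edge_vert huv.symm), ne_eq,
      Bool.xor_right_inj]
    exact c.valid (v := ⟨u, K.edge_vert huv⟩) (w := ⟨v, K.edge_vert huv.symm⟩) huv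
  have hinj : Function.Injective fun p =>
      (⟨φ p, hproper p⟩ : {f : V → Bool // ∀ ⦃u v⦄, K.Adj u v → f u ≠ f v}) := by
    rintro ⟨b, g⟩ ⟨b', g'⟩ h
    have h := congrArg Subtype.val h
    refine Prod.ext ?_ (funext fun x => ?_)
    · simpa [φ, hv₀] using congrFun h v₀
    · simpa [φ, dif_neg (show (x : V) ∉ K.verts from x.2)] using congrFun h x
  have hcard := Fintype.card_le_of_injective _ hinj
  rw [Fintype.card_subtype, Fintype.card_prod, Fintype.card_fun, Fintype.card_compl_set,
    Fintype.card_bool] at hcard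
  have hK : 1 ≤ Fintype.card K.verts := Fintype.card_pos_iff.mpr ⟨⟨v₀, hv₀⟩⟩
  have hKV : Fintype.card K.verts ≤ Fintype.card V := Fintype.card_subtype_le _
  calc 2 ^ Fintype.card V
      = 2 ^ (Fintype.card K.verts - 1) * (2 * 2 ^ (Fintype.card V - Fintype.card K.verts)) := by
        rw [← pow_succ', ← pow_add]; congr 1; omega
    _ ≤ _ := Nat.mul_le_mul_left _ hcard

open scoped Classical in
lemma copyCount_le_of_forall_cut [Fintype α] [Nonempty α] [Fintype V]
    {H : SimpleGraph α} (c : H.Coloring Bool) (G : SimpleGraph V) {M : ℕ}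
    (hM : ∀ f, _root_.copyCount H (G.cut f) ≤ M) :
    _root_.copyCount H G ≤ 2 ^ (Fintype.card α - 1) * M := by
  set S := ({K : G.Subgraph | Nonempty (H ≃g K.coe)} : Finset G.Subgraph)
  have hS : _root_.copyCount H G = #S :=
    Nat.card_eq_fintype_card.trans (Fintype.card_subtype _)
  have hcolorings : ∀ K ∈ S, 2 ^ Fintype.card V ≤
      2 ^ (Fintype.card α - 1) * #{f : V → Bool | ∀ ⦃u v⦄, K.Adj u v → f u ≠ f v} := by
    intro K hK
    obtain ⟨e⟩ := (mem_filter.mp hK).2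
    rw [Fintype.card_congr e.toEquiv]
    exact two_pow_card_le_card_properColorings K (c.comp e.symm.toHom)
      (e (Classical.arbitrary α)).2
  refine Nat.le_of_mul_le_mul_left ?_ (Nat.two_pow_pos (Fintype.card V))
  calc 2 ^ Fintype.card V * _root_.copyCount H G
      = ∑ _K ∈ S, 2 ^ Fintype.card V := by rw [hS, sum_const, smul_eq_mul, mul_comm]
    _ ≤ ∑ K ∈ S, 2 ^ (Fintype.card α - 1) *
          #{f : V → Bool | ∀ ⦃u v⦄, K.Adj u v → f u ≠ f v} := sum_le_sum hcolorings
    _ = 2 ^ (Fintype.card α - 1) *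
          ∑ f : V → Bool, #{K ∈ S | ∀ ⦃u v⦄, K.Adj u v → f u ≠ f v} := by
        simp only [← mul_sum, card_filter]
        rw [sum_comm]
    _ ≤ 2 ^ (Fintype.card α - 1) * ∑ _f : V → Bool, M := by
        refine Nat.mul_le_mul_left _ (sum_le_sum fun f _ => ?_)
        rw [filter_filter]
        exact (card_copies_properlyColored_le_copyCount_cut H G f).trans (hM f)
    _ = 2 ^ Fintype.card V * (2 ^ (Fintype.card α - 1) * M) := by
        rw [sum_const, card_univ, Fintype.card_fun, Fintype.card_bool, smul_eq_mul]; ring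

theorem stmt_6_general (A : Set ℕ) (k n : ℕ) (hk : 2 ≤ k) :
    exFam n (2 * k) {a | a ∈ A ∧ Even a} ≤ 2 ^ (2 * k - 1) * exFam n (2 * k) A := by
  have hbdd : BddAbove {c | ∃ G : SimpleGraph (Fin n),
      (∀ a ∈ A, CycleFreeOf G a) ∧ c = _root_.copyCount (cycleGraph (2 * k)) G} :=
    ((Set.finite_range fun G : SimpleGraph (Fin n) =>
      _root_.copyCount (cycleGraph (2 * k)) G).subset
        (by rintro _ ⟨G, -, rfl⟩; exact ⟨G, rfl⟩)).bddAbove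
  unfold exFam
  refine csSup_le' ?_
  rintro _ ⟨G, hG, rfl⟩
  have : NeZero (2 * k) := ⟨by omega⟩
  simpa using copyCount_le_of_forall_cut (cycleGraph.bicoloring_of_even _ (even_two_mul k)) G
    fun f => le_csSup hbdd ⟨G.cut f, SimpleGraph.cycleFreeOf_cut hG f, rfl⟩

/-- If each member of `A` is at least 3, `A_e` is the set of even members of `A`, and
`2k ∉ A`, then `ex(n, C_{2k}, 𝒞_A) ≥ (1/2^{2k-1}) · ex(n, C_{2k}, 𝒞_{A_e})`. -/
theorem stmt_6 (A : Set ℕ) (hA : ∀ a ∈ A, 3 ≤ a) (k n : ℕ) (hk : 2 ≤ k)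
    (h2k : 2 * k ∉ A) :
    exFam n (2 * k) {a | a ∈ A ∧ Even a} ≤ 2 ^ (2 * k - 1) * exFam n (2 * k) A :=
  stmt_6_general A k n hk
end

section
/- Let G be a bipartite graph with no cycle of length less than 2l (l ≥ 2). If C and C' are two distinct cycles of length 2l in G that share a path with l vertices (i.e., of length l-1), then the intersection of C and C' is exactly a path of length l-1 or a path of length l. -/
/-!
Read each cycle as the sequence `cycleVert eᵢ k` of its vertices, positions `k` taken modulo
`2l`, with both enumerations agreeing on the shared path at positions `0, …, l - 1`. By the
girth bound, two paths with common endpoints and total length `< 2l` coincide. If the vertex of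
`C₁` at a position `t ≥ l` lies on `C₂`, then either the two arcs from position `l - 1` to it or
the two arcs from it on to position `2l ≡ 0` have total length `< 2l`, so the cycles also agree
at position `l` or at position `2l - 1`. Agreement at both forces the remaining arcs, of length
`l - 1`, to coincide, i.e. `C₁ = C₂`. Agreement at exactly one of them, say `l`, makes the
intersection the path on positions `0, …, l`; agreement at neither makes it the path on
`0, …, l - 1`.
-/

open SimpleGraph

namespace SimpleGraph

variable {V : Type*} {G : SimpleGraph V}

theorem Walk.IsPath.eq_of_length_add_lt_egirth {u v : V} {p q : G.Walk u v} (hp : p.IsPath)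
    (hq : q.IsPath) (h : ((p.length + q.length : ℕ) : ℕ∞) < G.egirth) : p = q := by
  by_contra hne
  obtain ⟨w, -, -, c, hc, hlen⟩ := hp.exists_isCycle_length_le_add_of_ne hq hne
  exact (egirth_le_length hc).not_gt (lt_of_le_of_lt (by exact_mod_cast hlen) h)

section seqWalk

variable {F : ℕ → V} (hF : ∀ k, G.Adj (F k) (F (k + 1)))

def seqWalk (a : ℕ) : (m : ℕ) → G.Walk (F a) (F (a + m))
  | 0 => .nil
  | m + 1 => .cons (hF a) ((seqWalk (a + 1) m).copy rfl (congrArg F (Nat.add_right_comm a 1 m)))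

@[simp]
theorem length_seqWalk (a m : ℕ) : (seqWalk hF a m).length = m := by
  induction m generalizing a with
  | zero => rfl
  | succ m ih => simp [seqWalk, ih]

theorem getVert_seqWalk {a m s : ℕ} (hs : s ≤ m) : (seqWalk hF a m).getVert s = F (a + s) := by
  induction m generalizing a s with
  | zero => simp [Nat.le_zero.1 hs, seqWalk]
  | succ m ih =>
    cases s with
    | zero => simp
    | succ s =>
      rw [seqWalk, Walk.getVert_cons_succ, Walk.getVert_copy, ih (by omega)]
      exact congrArg F (by omega)

theorem isPath_seqWalk {a m : ℕ} (hinj : Set.InjOn F (Set.Icc a (a + m))) :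
    (seqWalk hF a m).IsPath := by
  refine (Walk.IsPath.getVert_injOn_iff _).1 fun s hs t ht hst => ?_
  simp only [length_seqWalk, Set.mem_ofPred_eq] at hs ht
  rw [getVert_seqWalk hF hs, getVert_seqWalk hF ht] at hst
  have := hinj ⟨by omega, by omega⟩ ⟨by omega, by omega⟩ hst
  omega

end seqWalk

theorem seq_eq_of_length_add_lt_egirth {F₁ F₂ : ℕ → V} (hF₁ : ∀ k, G.Adj (F₁ k) (F₁ (k + 1)))
    (hF₂ : ∀ k, G.Adj (F₂ k) (F₂ (k + 1))) {a b m m' : ℕ}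
    (hinj₁ : Set.InjOn F₁ (Set.Icc a (a + m))) (hinj₂ : Set.InjOn F₂ (Set.Icc b (b + m')))
    (hstart : F₁ a = F₂ b) (hend : F₁ (a + m) = F₂ (b + m'))
    (hlt : ((m + m' : ℕ) : ℕ∞) < G.egirth) :
    m = m' ∧ ∀ s ≤ m, F₁ (a + s) = F₂ (b + s) := by
  have heq := (isPath_seqWalk hF₁ hinj₁).eq_of_length_add_lt_egirth
    (q := (seqWalk hF₂ b m').copy hstart.symm hend.symm)
    (by simpa using isPath_seqWalk hF₂ hinj₂) (by simpa using hlt)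
  have hm : m = m' := by simpa using congrArg Walk.length heq
  refine ⟨hm, fun s hs => ?_⟩
  have := congrArg (Walk.getVert · s) heq
  simp only [Walk.getVert_copy] at this
  rwa [getVert_seqWalk hF₁ hs, getVert_seqWalk hF₂ (hm ▸ hs)] at this

theorem Subgraph.le_of_iso_apply_eq {W : Type*} {K : SimpleGraph W} {H₁ H₂ : G.Subgraph}
    (e₁ : K ≃g H₁.coe) (e₂ : K ≃g H₂.coe) (h : ∀ x, (e₁ x : V) = e₂ x) : H₁ ≤ H₂ := by
  refine ⟨fun v hv => ?_, fun u v huv => ?_⟩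
  · simpa [← h] using (e₂ (e₁.symm ⟨v, hv⟩)).2
  · have hK := e₁.symm.map_rel_iff.2 (show H₁.coe.Adj ⟨u, huv.fst_mem⟩ ⟨v, huv.snd_mem⟩ from huv)
    simpa [← h] using e₂.map_rel_iff.2 hK

theorem Subgraph.eq_of_iso_apply_eq {W : Type*} {K : SimpleGraph W} {H₁ H₂ : G.Subgraph}
    (e₁ : K ≃g H₁.coe) (e₂ : K ≃g H₂.coe) (h : ∀ x, (e₁ x : V) = e₂ x) : H₁ = H₂ :=
  (Subgraph.le_of_iso_apply_eq e₁ e₂ h).antisymm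
    (Subgraph.le_of_iso_apply_eq e₂ e₁ fun x => (h x).symm)

section cycleGraph

open Fin.CommRing

variable {L : ℕ} [NeZero L]

theorem cycleGraph_adj_iff (hL : 2 ≤ L) {u v : Fin L} :
    (cycleGraph L).Adj u v ↔ v = u + 1 ∨ v = u - 1 := by
  have h1 : ((1 : Fin L) : ℕ) = 1 := by rw [Fin.val_one', Nat.mod_eq_of_lt hL]
  rw [cycleGraph_adj', ← h1, ← Fin.ext_iff, ← Fin.ext_iff, sub_eq_iff_eq_add', sub_eq_iff_eq_add',
    eq_sub_iff_add_eq, add_comm, eq_comm, or_comm]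

theorem cycleGraph_natCast_adj_iff (hL : 2 ≤ L) {i j : ℕ} (hi : i + 1 < L) (hj : j + 1 < L) :
    (cycleGraph L).Adj (i : Fin L) (j : Fin L) ↔ j = i + 1 ∨ i = j + 1 := by
  rw [cycleGraph_adj_iff hL, eq_sub_iff_add_eq, ← Nat.cast_succ, ← Nat.cast_succ, Fin.ext_iff,
    Fin.ext_iff, Fin.val_cast_of_lt (by omega), Fin.val_cast_of_lt hi, Fin.val_cast_of_lt hj,
    Fin.val_cast_of_lt (by omega), eq_comm (a := j + 1)]

def cycleGraph.addLeft (c : Fin L) : cycleGraph L ≃g cycleGraph L where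
  toEquiv := Equiv.addLeft c
  map_rel_iff' := by simp [cycleGraph_adj']

def cycleGraph.subLeft (c : Fin L) : cycleGraph L ≃g cycleGraph L where
  toEquiv := Equiv.subLeft c
  map_rel_iff' := by simp [cycleGraph_adj', or_comm]

@[simp]
theorem cycleGraph.addLeft_apply (c u : Fin L) : cycleGraph.addLeft c u = c + u := rfl

@[simp]
theorem cycleGraph.subLeft_apply (c u : Fin L) : cycleGraph.subLeft c u = c - u := rfl

theorem cycleGraph.exists_eq_add_or_eq_sub (hL : 2 ≤ L) {k : ℕ}
    (φ : pathGraph k →g cycleGraph L) (hφ : Function.Injective φ) :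
    ∃ c : Fin L, (∀ i : Fin k, φ i = c + (i.val : Fin L)) ∨
      (∀ i : Fin k, φ i = c - (i.val : Fin L)) := by
  rcases Nat.lt_or_ge k 2 with hk | hk
  · refine ⟨if h : 0 < k then φ ⟨0, h⟩ else 0, Or.inl fun ⟨i, hi⟩ => ?_⟩
    obtain rfl : i = 0 := by omega
    simp [hi]
  set c := φ ⟨0, by omega⟩
  obtain ⟨d, hd, h1⟩ : ∃ d : Fin L, (d = 1 ∨ d = -1) ∧ φ ⟨1, hk⟩ = c + d := by
    rcases (cycleGraph_adj_iff hL).1 (φ.map_adj (pathGraph_adj.2 (Or.inl rfl) :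
        (pathGraph k).Adj ⟨0, by omega⟩ ⟨1, hk⟩)) with h | h
    · exact ⟨1, Or.inl rfl, h⟩
    · exact ⟨-1, Or.inr rfl, h.trans (sub_eq_add_neg _ _)⟩
  have key : ∀ n (hn : n < k), φ ⟨n, hn⟩ = c + (n : Fin L) * d := by
    intro n
    induction n using Nat.twoStepInduction with
    | zero => simp [c]
    | one => exact fun _ => by simpa using h1
    | more n ih₀ ih₁ =>
      intro hn
      have hadj := (cycleGraph_adj_iff hL).1 (φ.map_adj (pathGraph_adj.2 (Or.inl rfl) :
        (pathGraph k).Adj ⟨n + 1, by omega⟩ ⟨n + 2, hn⟩))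
      have hback : φ ⟨n + 2, hn⟩ ≠ c + (n : Fin L) * d := by
        rw [← ih₀ (by omega)]
        exact hφ.ne (by simp)
      rw [ih₁ (by omega)] at hadj
      rcases hd with rfl | rfl <;> rcases hadj with h | h
      · rw [h]; push_cast; ring
      · exact (hback (by rw [h]; push_cast; ring)).elim
      · exact (hback (by rw [h]; push_cast; ring)).elim
      · rw [h]; push_cast; ring
  refine ⟨c, ?_⟩
  rcases hd with rfl | rfl
  · exact Or.inl fun i => by simp [key i i.2]
  · exact Or.inr fun i => by simp [key i i.2, sub_eq_add_neg]

theorem exists_iso_cycleGraph_apply_eq {W : Type*} {K : SimpleGraph W} (hL : 2 ≤ L)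
    (e : cycleGraph L ≃g K) {k : ℕ} (φ : pathGraph k →g K) (hφ : Function.Injective φ) :
    ∃ e' : cycleGraph L ≃g K, ∀ i : Fin k, e' (i.val : Fin L) = φ i := by
  obtain ⟨c, h | h⟩ :=
    cycleGraph.exists_eq_add_or_eq_sub hL (e.symm.toHom.comp φ) (e.symm.injective.comp hφ)
  · exact ⟨(cycleGraph.addLeft c).trans e, fun i => by simp [← h i]⟩
  · exact ⟨(cycleGraph.subLeft c).trans e, fun i => by simp [← h i]⟩

variable {H : G.Subgraph}

def cycleVert (e : cycleGraph L ≃g H.coe) (k : ℕ) : V := e k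

variable (e : cycleGraph L ≃g H.coe)

theorem cycleVert_mem_verts (k : ℕ) : cycleVert e k ∈ H.verts := (e k).2

theorem adj_cycleVert_succ (hL : 2 ≤ L) (k : ℕ) : H.Adj (cycleVert e k) (cycleVert e (k + 1)) :=
  e.map_rel_iff.2 ((cycleGraph_adj_iff hL).2 (Or.inl (Nat.cast_succ k)))

theorem cycleVert_self : cycleVert e L = cycleVert e 0 := by
  simp [cycleVert]

theorem cycleVert_injOn {a m : ℕ} (hm : m < L) : Set.InjOn (cycleVert e) (Set.Icc a (a + m)) := by
  rintro x ⟨hx, hx'⟩ y ⟨hy, hy'⟩ hxy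
  have hmod : x ≡ y [MOD L] := by
    simpa [Fin.ext_iff, Nat.ModEq] using e.injective (Subtype.val_injective hxy)
  exact hmod.eq_of_abs_lt (abs_sub_lt_iff.2 ⟨by omega, by omega⟩)

theorem exists_cycleVert_eq {v : V} (hv : v ∈ H.verts) : ∃ k < L, cycleVert e k = v :=
  ⟨(e.symm ⟨v, hv⟩).val, (e.symm _).2, by simp [cycleVert]⟩

theorem cycleVert_subLeft_trans {c s t : ℕ} (h : s + t ≡ c [MOD L]) :
    cycleVert ((cycleGraph.subLeft c).trans e) s = cycleVert e t := by
  have : ((t + s : ℕ) : Fin L) = c := by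
    rw [Fin.ext_iff, Fin.val_natCast, Fin.val_natCast, add_comm]
    exact h
  simp [cycleVert, ← this]

theorem cycleVert_eq_of_length_add_lt_egirth {L' : ℕ} [NeZero L'] {H' : G.Subgraph}
    (e' : cycleGraph L' ≃g H'.coe) (hL : 2 ≤ L) (hL' : 2 ≤ L') {a b m m' : ℕ} (hm : m < L)
    (hm' : m' < L') (hstart : cycleVert e a = cycleVert e' b)
    (hend : cycleVert e (a + m) = cycleVert e' (b + m')) (hlt : ((m + m' : ℕ) : ℕ∞) < G.egirth) :
    m = m' ∧ ∀ s ≤ m, cycleVert e (a + s) = cycleVert e' (b + s) :=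
  seq_eq_of_length_add_lt_egirth (fun k => (adj_cycleVert_succ e hL k).adj_sub)
    (fun k => (adj_cycleVert_succ e' hL' k).adj_sub) (cycleVert_injOn e hm)
    (cycleVert_injOn e' hm') hstart hend hlt

theorem mem_inf_verts_iff_exists_cycleVert {H₁ H₂ : G.Subgraph} (e₁ : cycleGraph L ≃g H₁.coe)
    (e₂ : cycleGraph L ≃g H₂.coe) {k : ℕ} (hagree : ∀ s ≤ k, cycleVert e₁ s = cycleVert e₂ s)
    (hout : ∀ t, k < t → t < L → cycleVert e₁ t ∉ H₂.verts) (v : V) :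
    v ∈ (H₁ ⊓ H₂).verts ↔ ∃ s ≤ k, cycleVert e₁ s = v := by
  refine ⟨fun ⟨hv₁, hv₂⟩ => ?_, ?_⟩
  · obtain ⟨s, hs, rfl⟩ := exists_cycleVert_eq e₁ hv₁
    exact ⟨s, not_lt.1 fun h => hout s h hs hv₂, rfl⟩
  · rintro ⟨s, hs, rfl⟩
    exact ⟨cycleVert_mem_verts e₁ s, hagree s hs ▸ cycleVert_mem_verts e₂ s⟩

theorem inf_eq_toSubgraph_seqWalk {H₁ H₂ : G.Subgraph} (hL : 2 ≤ L)
    (e₁ : cycleGraph L ≃g H₁.coe) (e₂ : cycleGraph L ≃g H₂.coe) {k : ℕ} (hk : k + 2 ≤ L)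
    (hagree : ∀ s ≤ k, cycleVert e₁ s = cycleVert e₂ s)
    (hout : ∀ t, k < t → t < L → cycleVert e₁ t ∉ H₂.verts) :
    H₁ ⊓ H₂ = (seqWalk (fun j => (adj_cycleVert_succ e₁ hL j).adj_sub) 0 k).toSubgraph := by
  have hgetVert : ∀ s ≤ k, (seqWalk (fun j => (adj_cycleVert_succ e₁ hL j).adj_sub) 0 k).getVert s
      = cycleVert e₁ s := fun s hs => by simp [getVert_seqWalk _ hs]
  have hverts := mem_inf_verts_iff_exists_cycleVert e₁ e₂ hagree hout
  ext u v
  · rw [hverts, Walk.verts_toSubgraph, Set.mem_ofPred_eq, Walk.mem_support_iff_exists_getVert,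
      length_seqWalk]
    exact ⟨fun ⟨s, hs, hsu⟩ => ⟨s, (hgetVert s hs).trans hsu, hs⟩,
      fun ⟨s, hsu, hs⟩ => ⟨s, hs, (hgetVert s hs).symm.trans hsu⟩⟩
  · rw [Subgraph.inf_adj, Walk.toSubgraph_adj_iff, length_seqWalk]
    constructor
    · rintro ⟨h₁, h₂⟩
      obtain ⟨i, hi, rfl⟩ := (hverts u).1 ⟨h₁.fst_mem, h₂.fst_mem⟩
      obtain ⟨j, hj, rfl⟩ := (hverts v).1 ⟨h₁.snd_mem, h₂.snd_mem⟩
      have hadj := e₁.map_rel_iff.1 (show H₁.coe.Adj (e₁ i) (e₁ j) from h₁)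
      rcases (cycleGraph_natCast_adj_iff hL (by omega) (by omega)).1 hadj with rfl | rfl
      · exact ⟨i, by rw [hgetVert i (by omega), hgetVert (i + 1) hj], by omega⟩
      · exact ⟨j, by rw [hgetVert j (by omega), hgetVert (j + 1) hi, Sym2.eq_swap], by omega⟩
    · rintro ⟨i, hs, hi⟩
      rw [hgetVert i hi.le, hgetVert (i + 1) hi] at hs
      have h₁ := adj_cycleVert_succ e₁ hL i
      have h₂ := adj_cycleVert_succ e₂ hL i
      rw [← hagree i hi.le, ← hagree (i + 1) hi] at h₂
      rcases Sym2.eq_iff.1 hs with ⟨rfl, rfl⟩ | ⟨rfl, rfl⟩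
      exacts [⟨h₁, h₂⟩, ⟨h₁.symm, h₂.symm⟩]

theorem nonempty_inf_iso_pathGraph {H₁ H₂ : G.Subgraph} (hL : 2 ≤ L)
    (e₁ : cycleGraph L ≃g H₁.coe) (e₂ : cycleGraph L ≃g H₂.coe) {k : ℕ} (hk : k + 2 ≤ L)
    (hagree : ∀ s ≤ k, cycleVert e₁ s = cycleVert e₂ s)
    (hout : ∀ t, k < t → t < L → cycleVert e₁ t ∉ H₂.verts) :
    Nonempty ((H₁ ⊓ H₂).coe ≃g pathGraph (k + 1)) := by
  classical
  have hp := isPath_seqWalk (fun j => (adj_cycleVert_succ e₁ hL j).adj_sub) (a := 0)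
    (cycleVert_injOn e₁ (m := k) (by omega))
  obtain ⟨iso⟩ := Nonempty.intro hp.pathGraphIsoToSubgraph.symm
  rw [length_seqWalk] at iso
  exact inf_eq_toSubgraph_seqWalk hL e₁ e₂ hk hagree hout ▸ ⟨iso⟩

section twoCycles

variable {l : ℕ} [NeZero l] {H₁ H₂ : G.Subgraph}
  (e₁ : cycleGraph (2 * l) ≃g H₁.coe) (e₂ : cycleGraph (2 * l) ≃g H₂.coe)

theorem eq_of_cycleVert_eq (hl : 2 ≤ l) (hg : ((2 * l : ℕ) : ℕ∞) ≤ G.egirth)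
    (halign : ∀ s < l, cycleVert e₁ s = cycleVert e₂ s)
    (hfirst : cycleVert e₁ l = cycleVert e₂ l)
    (hlast : cycleVert e₁ (2 * l - 1) = cycleVert e₂ (2 * l - 1)) : H₁ = H₂ := by
  obtain ⟨-, harc⟩ := cycleVert_eq_of_length_add_lt_egirth e₁ e₂ (m := l - 1) (m' := l - 1)
    (by omega) (by omega) (by omega) (by omega) hfirst
    (by rwa [show l + (l - 1) = 2 * l - 1 by omega]) ((Nat.cast_lt.2 (by omega)).trans_le hg)
  refine Subgraph.eq_of_iso_apply_eq e₁ e₂ fun i => ?_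
  rw [← Fin.cast_val_eq_self i]
  change cycleVert e₁ i.val = cycleVert e₂ i.val
  rcases lt_or_ge i.val l with h | h
  · exact halign _ h
  · simpa [show l + (i.val - l) = i.val by omega] using harc (i.val - l) (by omega)
theorem cycleVert_eq_of_mem_verts (hl : 2 ≤ l) (hg : ((2 * l : ℕ) : ℕ∞) ≤ G.egirth)
    (halign : ∀ s < l, cycleVert e₁ s = cycleVert e₂ s) {t : ℕ} (ht : l ≤ t) (ht' : t < 2 * l)
    (hmem : cycleVert e₁ t ∈ H₂.verts) :
    (cycleVert e₁ t = cycleVert e₂ t ∧ cycleVert e₁ l = cycleVert e₂ l) ∨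
      cycleVert e₁ (2 * l - 1) = cycleVert e₂ (2 * l - 1) := by
  obtain ⟨j, hj, hjt⟩ := exists_cycleVert_eq e₂ hmem
  have hlj : l ≤ j := by
    by_contra! h
    have := cycleVert_injOn e₁ (a := 0) (m := 2 * l - 1) (by omega) ⟨by omega, by omega⟩
      ⟨by omega, by omega⟩ (hjt.symm.trans (halign j h).symm)
    omega
  by_cases hfwd : t - (l - 1) + (j - (l - 1)) < 2 * l
  · obtain ⟨hm, harc⟩ := cycleVert_eq_of_length_add_lt_egirth e₁ e₂ (a := l - 1) (b := l - 1)
      (by omega) (by omega) (by omega) (by omega) (halign _ (by omega))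
      (by rw [show l - 1 + (t - (l - 1)) = t by omega, show l - 1 + (j - (l - 1)) = j by omega,
        hjt]) ((Nat.cast_lt.2 hfwd).trans_le hg)
    refine Or.inl ⟨by rw [← hjt, show j = t by omega], ?_⟩
    simpa [show l - 1 + 1 = l by omega] using harc 1 (by omega)
  · obtain ⟨hm, harc⟩ := cycleVert_eq_of_length_add_lt_egirth e₁ e₂ (m := 2 * l - t)
      (m' := 2 * l - j) (by omega) (by omega) (by omega) (by omega) hjt.symm
      (by rw [show t + (2 * l - t) = 2 * l by omega, show j + (2 * l - j) = 2 * l by omega,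
        cycleVert_self, cycleVert_self, halign 0 (by omega)])
      ((Nat.cast_lt.2 (by omega)).trans_le hg)
    right
    simpa [show t + (2 * l - 1 - t) = 2 * l - 1 by omega,
      show j + (2 * l - 1 - t) = 2 * l - 1 by omega] using harc (2 * l - 1 - t) (by omega)

theorem nonempty_inf_iso_of_ne_last (hl : 2 ≤ l) (hg : ((2 * l : ℕ) : ℕ∞) ≤ G.egirth)
    (halign : ∀ s < l, cycleVert e₁ s = cycleVert e₂ s)
    (hlast : cycleVert e₁ (2 * l - 1) ≠ cycleVert e₂ (2 * l - 1)) :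
    Nonempty ((H₁ ⊓ H₂).coe ≃g pathGraph l) ∨
      Nonempty ((H₁ ⊓ H₂).coe ≃g pathGraph (l + 1)) := by
  have hcommon := fun t ht ht' hmem =>
    (cycleVert_eq_of_mem_verts e₁ e₂ hl hg halign (t := t) ht ht' hmem).resolve_right hlast
  by_cases hfirst : cycleVert e₁ l = cycleVert e₂ l
  · refine Or.inr (nonempty_inf_iso_pathGraph (by omega) e₁ e₂ (by omega) (fun s hs => ?_)
      fun t ht ht' hmem => hlast ?_)
    · rcases hs.lt_or_eq with hs | rfl
      exacts [halign s hs, hfirst]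
    · -- the two arcs from position `t > l` on to position `2l` are shorter than `l`
      obtain ⟨-, harc⟩ := cycleVert_eq_of_length_add_lt_egirth e₁ e₂ (m := 2 * l - t)
        (m' := 2 * l - t) (by omega) (by omega) (by omega) (by omega)
        (hcommon t ht.le ht' hmem).1
        (by rw [show t + (2 * l - t) = 2 * l by omega, cycleVert_self, cycleVert_self,
          halign 0 (by omega)])
        ((Nat.cast_lt.2 (by omega)).trans_le hg)
      simpa [show t + (2 * l - 1 - t) = 2 * l - 1 by omega] using harc (2 * l - 1 - t) (by omega)
  · have := nonempty_inf_iso_pathGraph (by omega) e₁ e₂ (k := l - 1) (by omega)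
      (fun s hs => halign s (by omega))
      fun t ht ht' hmem => hfirst (hcommon t (by omega) ht' hmem).2
    rw [Nat.sub_add_cancel (by omega)] at this
    exact Or.inl this

theorem nonempty_inf_iso_of_ne_first (hl : 2 ≤ l) (hg : ((2 * l : ℕ) : ℕ∞) ≤ G.egirth)
    (halign : ∀ s < l, cycleVert e₁ s = cycleVert e₂ s)
    (hfirst : cycleVert e₁ l ≠ cycleVert e₂ l) :
    Nonempty ((H₁ ⊓ H₂).coe ≃g pathGraph l) ∨
      Nonempty ((H₁ ⊓ H₂).coe ≃g pathGraph (l + 1)) := by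
  have hwrap : 2 * l - 1 + l ≡ l - 1 [MOD 2 * l] := by
    simp [Nat.ModEq, show 2 * l - 1 + l = l - 1 + 2 * l by omega]
  have hcancel : ∀ s < l, s + (l - 1 - s) ≡ l - 1 [MOD 2 * l] := fun s hs => by
    rw [show s + (l - 1 - s) = l - 1 by omega]
  -- reflecting both cycles in the shared path swaps positions `l` and `2l - 1`
  refine nonempty_inf_iso_of_ne_last ((cycleGraph.subLeft (l - 1 : ℕ)).trans e₁)
    ((cycleGraph.subLeft (l - 1 : ℕ)).trans e₂) hl hg (fun s hs => ?_) ?_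
  · rw [cycleVert_subLeft_trans e₁ (hcancel s hs), cycleVert_subLeft_trans e₂ (hcancel s hs)]
    exact halign _ (by omega)
  · rwa [cycleVert_subLeft_trans e₁ hwrap, cycleVert_subLeft_trans e₂ hwrap]

end twoCycles

end cycleGraph

end SimpleGraph

theorem stmt_9_general {V : Type*} (G : SimpleGraph V) (l : ℕ) (hl : 2 ≤ l)
    (hgirth : ∀ (v : V) (w : G.Walk v v), w.IsCycle → 2 * l ≤ w.length)
    (H₁ H₂ : G.Subgraph) (hne : H₁ ≠ H₂)
    (h₁ : Nonempty (H₁.coe ≃g cycleGraph (2 * l)))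
    (h₂ : Nonempty (H₂.coe ≃g cycleGraph (2 * l)))
    (hshare : ∃ P : G.Subgraph, P ≤ H₁ ⊓ H₂ ∧ Nonempty (P.coe ≃g pathGraph l)) :
    Nonempty ((H₁ ⊓ H₂).coe ≃g pathGraph l) ∨
      Nonempty ((H₁ ⊓ H₂).coe ≃g pathGraph (l + 1)) := by
  have : NeZero l := ⟨by omega⟩
  have hg : ((2 * l : ℕ) : ℕ∞) ≤ G.egirth :=
    le_egirth.2 fun v w hw => Nat.cast_le.2 (hgirth v w hw)
  obtain ⟨P, hP, ⟨ρ⟩⟩ := hshare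
  have hP₁ := hP.trans inf_le_left
  have hP₂ := hP.trans inf_le_right
  obtain ⟨e₁, he₁⟩ := exists_iso_cycleGraph_apply_eq (by omega) h₁.some.symm
    ((Subgraph.inclusion hP₁).comp ρ.symm.toHom)
    ((Subgraph.inclusion.injective hP₁).comp ρ.symm.injective)
  obtain ⟨e₂, he₂⟩ := exists_iso_cycleGraph_apply_eq (by omega) h₂.some.symm
    ((Subgraph.inclusion hP₂).comp ρ.symm.toHom)
    ((Subgraph.inclusion.injective hP₂).comp ρ.symm.injective)
  have halign : ∀ s < l, cycleVert e₁ s = cycleVert e₂ s := fun s hs =>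
    (congrArg Subtype.val (he₁ ⟨s, hs⟩)).trans (congrArg Subtype.val (he₂ ⟨s, hs⟩)).symm
  by_cases hfirst : cycleVert e₁ l = cycleVert e₂ l
  · exact nonempty_inf_iso_of_ne_last e₁ e₂ hl hg halign fun hlast =>
      hne (eq_of_cycleVert_eq e₁ e₂ hl hg halign hfirst hlast)
  · exact nonempty_inf_iso_of_ne_first e₁ e₂ hl hg halign hfirst

/-- Let `G` be a bipartite graph with no cycle of length less than `2l` (`l ≥ 2`). If `C`
and `C'` are distinct cycles of length `2l` in `G` (given as subgraphs isomorphic to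
`C_{2l}`) sharing a path with `l` vertices, then their intersection is exactly a path of
length `l-1` (with `l` vertices) or a path of length `l` (with `l+1` vertices). -/
theorem stmt_9 {V : Type*} (G : SimpleGraph V) (l : ℕ) (hl : 2 ≤ l)
    (hbip : G.Colorable 2)
    (hgirth : ∀ (v : V) (w : G.Walk v v), w.IsCycle → 2 * l ≤ w.length)
    (H₁ H₂ : G.Subgraph) (hne : H₁ ≠ H₂)
    (h₁ : Nonempty (H₁.coe ≃g cycleGraph (2 * l)))
    (h₂ : Nonempty (H₂.coe ≃g cycleGraph (2 * l)))
    (hshare : ∃ P : G.Subgraph, P ≤ H₁ ⊓ H₂ ∧ Nonempty (P.coe ≃g pathGraph l)) :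
    Nonempty ((H₁ ⊓ H₂).coe ≃g pathGraph l) ∨
      Nonempty ((H₁ ⊓ H₂).coe ≃g pathGraph (l + 1)) :=
  stmt_9_general G l hl hgirth H₁ H₂ hne h₁ h₂ hshare
end

section
/- Let G be a graph of girth at least 2l (all cycles have length at least 2l), and let u, v be a pair of vertices with at least 4l^2 internally disjoint-endpoint paths of length l between them (paths with l edges from u to v). Then for any set X of at most 4l vertices, there exists a path P of length l from u to v whose internal vertices avoid X. -/
/-!
If every path of length `l` from `u` to `v` had an internal vertex in `X`, record for each path
such a vertex `x ∈ X` together with its position `i ∈ {1, …, l - 1}` along the path. Girth at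
least `2l` makes paths of length `< l` unique, so the pieces `u → x` and `x → v` (of lengths `i`
and `l - i`) are determined by `(x, i)`. This injects the paths into `X × {1, …, l - 1}`, a set
of size at most `4l(l - 1) < 4l²`.
-/

open SimpleGraph

namespace SimpleGraph.Walk

variable {V : Type*} {G : SimpleGraph V} {u v : V}

theorem IsPath.eq_of_length_add_length_lt_egirth {p q : G.Walk u v} (hp : p.IsPath)
    (hq : q.IsPath) (hlt : ((p.length + q.length : ℕ) : ℕ∞) < G.egirth) : p = q := by
  by_contra hne
  obtain ⟨_, _, p', q', hp', hq', hcyc⟩ := hp.exists_isCycle_of_ne hq hne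
  have hle : (p'.append q'.reverse).length ≤ p.length + q.length := by
    rw [length_append, length_reverse]
    exact Nat.add_le_add (length_le_of_isSubwalk hp') (length_le_of_isSubwalk hq')
  exact (G.egirth_le_length hcyc).not_gt (lt_of_le_of_lt (by exact_mod_cast hle) hlt)

variable [DecidableEq V]

theorem pos_idxOf_of_ne_start {p : G.Walk u v} {x : V} (hx : x ∈ p.support) (hxu : x ≠ u) :
    0 < p.support.idxOf x := by
  rw [← length_takeUntil p hx, Nat.pos_iff_ne_zero]
  exact fun h => hxu (eq_of_length_eq_zero h).symm

theorem idxOf_lt_length_of_ne_end {p : G.Walk u v} {x : V} (hx : x ∈ p.support) (hxv : x ≠ v) :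
    p.support.idxOf x < p.length :=
  length_takeUntil p hx ▸ length_takeUntil_lt_length hx hxv

theorem IsPath.eq_of_idxOf_eq {n : ℕ} (hg : 2 * n ≤ G.egirth) {p q : G.Walk u v}
    (hp : p.IsPath) (hq : q.IsPath) (hpn : p.length = n) (hqn : q.length = n) {x : V}
    (hxp : x ∈ p.support) (hxq : x ∈ q.support) (hxu : x ≠ u) (hxv : x ≠ v)
    (hidx : p.support.idxOf x = q.support.idxOf x) : p = q := by
  have hpos := pos_idxOf_of_ne_start hxp hxu
  have hlt := idxOf_lt_length_of_ne_end hxp hxv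
  have short {m : ℕ} (hm : m < 2 * n) : (m : ℕ∞) < G.egirth :=
    lt_of_lt_of_le (by exact_mod_cast hm) hg
  have htake : p.takeUntil x hxp = q.takeUntil x hxq :=
    (hp.takeUntil hxp).eq_of_length_add_length_lt_egirth (hq.takeUntil hxq)
      (short (by rw [length_takeUntil, length_takeUntil]; omega))
  have hdrop : p.dropUntil x hxp = q.dropUntil x hxq :=
    (hp.dropUntil hxp).eq_of_length_add_length_lt_egirth (hq.dropUntil hxq)
      (short (by rw [length_dropUntil, length_dropUntil]; omega))
  rw [← p.take_spec hxp, ← q.take_spec hxq, htake, hdrop]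

end SimpleGraph.Walk

namespace SimpleGraph

open Walk

theorem natCard_isPath_length_eq_le_ncard_mul {V : Type*} {G : SimpleGraph V} {u v : V} {n : ℕ}
    (hg : 2 * n ≤ G.egirth) {X : Set V} (hX : X.Finite)
    (hhit : ∀ p : G.Walk u v, p.IsPath → p.length = n →
      ∃ x ∈ X, x ∈ p.support ∧ x ≠ u ∧ x ≠ v) :
    Nat.card {p : G.Walk u v // p.IsPath ∧ p.length = n} ≤ X.ncard * (n - 1) := by
  classical
  choose x hxX hxp hxu hxv using fun p : {p : G.Walk u v // p.IsPath ∧ p.length = n} =>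
    hhit p.1 p.2.1 p.2.2
  let position : {p : G.Walk u v // p.IsPath ∧ p.length = n} → X × Fin (n - 1) := fun p =>
    (⟨x p, hxX p⟩, ⟨p.1.support.idxOf (x p) - 1, by
      have := pos_idxOf_of_ne_start (hxp p) (hxu p)
      have := idxOf_lt_length_of_ne_end (hxp p) (hxv p)
      omega⟩)
  have hinj : position.Injective := by
    rintro p q hpq
    simp only [position, Prod.mk.injEq, Subtype.mk.injEq, Fin.mk.injEq] at hpq
    obtain ⟨hx, hidx⟩ := hpq
    have hpos_p := pos_idxOf_of_ne_start (hxp p) (hxu p)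
    have hpos_q := pos_idxOf_of_ne_start (hxp q) (hxu q)
    refine Subtype.ext (p.2.1.eq_of_idxOf_eq hg q.2.1 p.2.2 q.2.2 (hxp p) (hx ▸ hxp q)
      (hxu p) (hxv p) ?_)
    rw [hx] at hidx hpos_p ⊢
    omega
  have := hX.to_subtype
  calc Nat.card {p : G.Walk u v // p.IsPath ∧ p.length = n}
      ≤ Nat.card (X × Fin (n - 1)) := Nat.card_le_card_of_injective position hinj
    _ = X.ncard * (n - 1) := by rw [Nat.card_prod, Nat.card_coe_set_eq, Nat.card_fin]

end SimpleGraph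

/-- Let `G` have girth at least `2l` (`l ≥ 2`) and let `u, v` be vertices with at least
`4l²` paths of length `l` between them. Then for any set `X` of at most `4l` vertices,
there is a path of length `l` from `u` to `v` whose internal vertices avoid `X`. -/
theorem stmt_10 {V : Type*} (G : SimpleGraph V) (l : ℕ) (hl : 2 ≤ l)
    (hgirth : ∀ (v : V) (w : G.Walk v v), w.IsCycle → 2 * l ≤ w.length)
    (u v : V)
    (hfat : 4 * l ^ 2 ≤ Nat.card {p : G.Walk u v // p.IsPath ∧ p.length = l})
    (X : Set V) (hXfin : X.Finite) (hX : X.ncard ≤ 4 * l) :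
    ∃ p : G.Walk u v, p.IsPath ∧ p.length = l ∧
      ∀ x ∈ X, x ∈ p.support → x = u ∨ x = v := by
  have hg : 2 * l ≤ G.egirth := le_egirth.2 fun a c hc => by exact_mod_cast hgirth a c hc
  by_contra! havoid
  have hcard := natCard_isPath_length_eq_le_ncard_mul hg hXfin havoid
  have : X.ncard * (l - 1) ≤ 4 * l * (l - 1) := Nat.mul_le_mul_right _ hX
  have : 4 * l * (l - 1) < 4 * l ^ 2 := by
    rw [sq, ← mul_assoc]
    exact Nat.mul_lt_mul_of_pos_left (by omega) (by omega)
  omega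
end

section
/- Let G be a C_8-free bipartite graph with parts A and B. Call a pair u,v of vertices in the same part fat if they have at least 4 common neighbors. If v_1 v_2 v_3 v_4 v_5 v_6 v_1 is a 6-cycle in G and {v_1, v_3} is a fat pair, then neither {v_2, v_4} nor {v_2, v_6} is a fat pair. -/
open SimpleGraph


lemma pick_of_four {V : Type*} (S : Set V) (a b c : V) (hS : 4 ≤ S.ncard) :
    ∃ x ∈ S, x ≠ a ∧ x ≠ b ∧ x ≠ c := by
  by_contra h
  push_neg at h
  have hsub : S ⊆ {a, b, c} := by
    intro x hx
    by_cases h1 : x = a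
    · simp [h1]
    by_cases h2 : x = b
    · simp [h2]
    simp [h x hx h1 h2]
  have hfin : ({a, b, c} : Set V).Finite :=
    (Set.finite_singleton c).insert b |>.insert a
  have := Set.ncard_le_ncard hsub hfin
  have h3 : ({a, b, c} : Set V).ncard ≤ 3 := by
    calc ({a, b, c} : Set V).ncard ≤ ({b, c} : Set V).ncard + 1 := Set.ncard_insert_le _ _
    _ ≤ (({c} : Set V).ncard + 1) + 1 := by gcongr; exact Set.ncard_insert_le _ _
    _ ≤ 3 := by simp [Set.ncard_singleton]
  omega

lemma cycle8 {V : Type*} (G : SimpleGraph V)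
    (h8 : ∀ (v : V) (w : G.Walk v v), w.IsCycle → w.length ≠ 8)
    (a b c d e f g h : V)
    (hnd : ([a, b, c, d, e, f, g, h] : List V).Nodup)
    (hab : G.Adj a b) (hbc : G.Adj b c) (hcd : G.Adj c d) (hde : G.Adj d e)
    (hef : G.Adj e f) (hfg : G.Adj f g) (hgh : G.Adj g h) (hha : G.Adj h a) :
    False := by
  simp only [List.nodup_cons, List.mem_cons, List.mem_singleton, List.not_mem_nil,
    not_or, List.nodup_nil, and_true] at hnd
  obtain ⟨⟨hab', hac, had, hae, haf, hag, hah⟩, ⟨hbc', hbd, hbe, hbf, hbg, hbh⟩,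
    ⟨hcd', hce, hcf, hcg, hch⟩, ⟨hde', hdf, hdg, hdh⟩, ⟨hef', heg, heh⟩,
    ⟨hfg', hfh⟩, hgh'⟩ := hnd
  let w : G.Walk a a :=
    .cons hab (.cons hbc (.cons hcd (.cons hde (.cons hef (.cons hfg
      (.cons hgh (.cons hha .nil)))))))
  apply h8 a w
  · refine ⟨⟨⟨?_⟩, by simp [w]⟩, ?_⟩
    · simp only [w, Walk.edges_cons, Walk.edges_nil, List.nodup_cons, List.mem_cons,
        List.not_mem_nil, not_or, Sym2.eq_iff, List.nodup_nil, and_true]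
      push_neg
      simp_all [ne_comm]
    · simp only [w, Walk.support_cons, Walk.support_nil, List.tail_cons, List.nodup_cons,
        List.mem_cons, List.not_mem_nil, not_or, List.nodup_nil, and_true,
        List.mem_singleton]
      simp_all [Ne.symm, eq_comm]
  · simp [w]

lemma chain5 {a b c d e : Prop} (h1 : a ↔ ¬b) (h2 : b ↔ ¬c) (h3 : c ↔ ¬d)
    (h4 : d ↔ ¬e) (h5 : a ↔ ¬e) : False := by tauto

lemma chainXY {a b x : Prop} (h1 : a ↔ ¬x) (h2 : b ↔ ¬x) (h3 : a ↔ ¬b) : False := by tauto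

lemma chainY6 {a b c : Prop} (h1 : a ↔ ¬b) (h2 : b ↔ ¬c) (h3 : c ↔ ¬a) : False := by tauto

/-- A pair of vertices is fat if they have at least 4 common neighbors. -/
def FatPair {V : Type*} (G : SimpleGraph V) (u v : V) : Prop :=
  4 ≤ {w | G.Adj u w ∧ G.Adj v w}.ncard

/-- Let `G` be a `C_8`-free bipartite graph with parts `A` and `Aᶜ`. If
`v₁v₂v₃v₄v₅v₆v₁` is a 6-cycle in `G` and `{v₁, v₃}` is a fat pair, then neither
`{v₂, v₄}` nor `{v₂, v₆}` is a fat pair. -/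
theorem stmt_11 {V : Type*} (G : SimpleGraph V) (A : Set V)
    (hbip : ∀ u v, G.Adj u v → (u ∈ A ↔ v ∉ A))
    (h8 : ∀ (v : V) (w : G.Walk v v), w.IsCycle → w.length ≠ 8)
    (v₁ v₂ v₃ v₄ v₅ v₆ : V)
    (hnodup : ([v₁, v₂, v₃, v₄, v₅, v₆] : List V).Nodup)
    (e₁ : G.Adj v₁ v₂) (e₂ : G.Adj v₂ v₃) (e₃ : G.Adj v₃ v₄)
    (e₄ : G.Adj v₄ v₅) (e₅ : G.Adj v₅ v₆) (e₆ : G.Adj v₆ v₁)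
    (hfat : FatPair G v₁ v₃) :
    ¬FatPair G v₂ v₄ ∧ ¬FatPair G v₂ v₆ := by
  simp only [List.nodup_cons, List.mem_cons, List.mem_singleton, List.not_mem_nil,
    not_false_iff, not_or, List.nodup_nil, and_true] at hnodup
  obtain ⟨⟨h12, h13, h14, h15, h16⟩, ⟨h23, h24, h25, h26⟩, ⟨h34, h35, h36⟩,
    ⟨h45, h46⟩, h56⟩ := hnodup
  -- pick x: common neighbor of v₁, v₃ avoiding v₂, v₄, v₆
  obtain ⟨x, ⟨hx1, hx3⟩, hx2, hx4, hx6⟩ := pick_of_four _ v₂ v₄ v₆ hfat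
  have hb1 := hbip _ _ e₁
  have hb2 := hbip _ _ e₂
  have hb3 := hbip _ _ e₃
  have hb4 := hbip _ _ e₄
  have hb5 := hbip _ _ e₅
  have hb6 := hbip _ _ e₆
  have hbx := hbip _ _ hx1
  have hx5 : x ≠ v₅ := by rintro rfl; exact chain5 hb1 hb2 hb3 hb4 hbx
  constructor
  · rintro hf
    obtain ⟨y, ⟨hy2, hy4⟩, hy1, hy3, hy5⟩ := pick_of_four _ v₁ v₃ v₅ hf
    have hby := hbip _ _ hy2
    have hxy : x ≠ y := by rintro rfl; exact chainXY hbx hby hb1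
    have hy6 : y ≠ v₆ := by rintro rfl; exact chainY6 hby hb6 hb1
    refine cycle8 G h8 v₁ x v₃ v₂ y v₄ v₅ v₆ ?_ hx1 hx3.symm e₂.symm hy2 hy4.symm e₄ e₅ e₆
    simp only [List.nodup_cons, List.mem_cons, List.mem_singleton, List.not_mem_nil,
      not_false_iff, not_or, List.nodup_nil, and_true]
    exact ⟨⟨hx1.ne, h13, h12, Ne.symm hy1, h14, h15, h16⟩,
      ⟨hx3.ne', hx2, hxy, hx4, hx5, hx6⟩,
      ⟨Ne.symm h23, Ne.symm hy3, h34, h35, h36⟩,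
      ⟨hy2.ne, h24, h25, h26⟩,
      ⟨hy4.ne', hy5, hy6⟩, ⟨h45, h46⟩, h56⟩
  · rintro hf
    obtain ⟨y, ⟨hy2, hy6⟩, hy1, hy3, hy5⟩ := pick_of_four _ v₁ v₃ v₅ hf
    have hby := hbip _ _ hy2
    have hxy : x ≠ y := by rintro rfl; exact chainXY hbx hby hb1
    have hy4 : y ≠ v₄ := by rintro rfl; exact chainXY hby hb3 hb2
    refine cycle8 G h8 v₁ x v₃ v₄ v₅ v₆ y v₂ ?_ hx1 hx3.symm e₃ e₄ e₅ hy6 hy2.symm e₁.symm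
    simp only [List.nodup_cons, List.mem_cons, List.mem_singleton, List.not_mem_nil,
      not_false_iff, not_or, List.nodup_nil, and_true]
    exact ⟨⟨hx1.ne, h13, h14, h15, h16, Ne.symm hy1, h12⟩,
      ⟨hx3.ne', hx4, hx5, hx6, hxy, hx2⟩,
      ⟨h34, h35, h36, Ne.symm hy3, Ne.symm h23⟩,
      ⟨h45, h46, Ne.symm hy4, Ne.symm h24⟩,
      ⟨h56, Ne.symm hy5, Ne.symm h25⟩,
      ⟨hy6.ne, Ne.symm h26⟩, hy2.ne'⟩
end

section
/- Let G be a C_8-free bipartite graph with parts A and B. Suppose {v_1,v_3} and {v_1',v_3'} are two distinct fat pairs of vertices in A (each having at least 4 common neighbors), and each is the A-side fat pair of some fat 6-cycle. Then |N(v_1,v_3) ∩ N(v_1',v_3')| ≤ 1, where N(x,y) is the set of common neighbors of x and y. -/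
open SimpleGraph

/-- `a b c d e f` form a 6-cycle in `G`. -/
def SixCycle {V : Type*} (G : SimpleGraph V) (a b c d e f : V) : Prop :=
  ([a, b, c, d, e, f] : List V).Nodup ∧
    G.Adj a b ∧ G.Adj b c ∧ G.Adj c d ∧ G.Adj d e ∧ G.Adj e f ∧ G.Adj f a

lemma fatPair_symm {V : Type*} {G : SimpleGraph V} {u v : V} (h : FatPair G u v) :
    FatPair G v u := by
  have he : {w | G.Adj v w ∧ G.Adj u w} = {w | G.Adj u w ∧ G.Adj v w} := by
    ext w; exact and_comm
  rw [FatPair, he]; exact h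

lemma sixCycle_rev {V : Type*} {G : SimpleGraph V} {u a p b c d : V}
    (h : SixCycle G u a p b c d) : SixCycle G p a u d c b := by
  obtain ⟨hnd, h1, h2, h3, h4, h5, h6⟩ := h
  refine ⟨?_, h2.symm, h1.symm, h6.symm, h5.symm, h4.symm, h3.symm⟩
  simp only [List.nodup_cons, List.mem_cons, List.not_mem_nil, or_false, not_or,
    List.nodup_nil, and_true] at hnd ⊢
  obtain ⟨⟨hua, hup, hub, huc, hud⟩, ⟨hap, hab, hac, had⟩, ⟨hpb, hpc, hpd⟩, ⟨hbc, hbd⟩,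
    hcd, -⟩ := hnd
  exact ⟨⟨Ne.symm hap, Ne.symm hup, hpd, hpc, hpb⟩, ⟨Ne.symm hua, had, hac, hab⟩,
    ⟨hud, huc, hub⟩, ⟨Ne.symm hcd, Ne.symm hbd⟩, Ne.symm hbc, fun h => h⟩

lemma pick3' {V : Type*} {N : Set V} (h : 4 ≤ N.ncard) (p q r : V) :
    ∃ z ∈ N, z ≠ p ∧ z ≠ q ∧ z ≠ r := by
  by_contra hc
  push_neg at hc
  have hsub : N ⊆ {p, q, r} := by
    intro z hz
    by_cases h1 : z = p; · simp [h1]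
    by_cases h2 : z = q; · simp [h2]
    simp [hc z hz h1 h2]
  have h1 := Set.ncard_le_ncard hsub (Set.toFinite _)
  have h2 : ({p, q, r} : Set V).ncard ≤ 3 := by
    refine le_trans (Set.ncard_insert_le _ _) ?_
    have := Set.ncard_insert_le q ({r} : Set V)
    simp [Set.ncard_singleton] at *
    omega
  omega

lemma eightCycleFalse {V : Type*} (G : SimpleGraph V)
    (h8 : ∀ (v : V) (w : G.Walk v v), w.IsCycle → w.length ≠ 8)
    (a b c d e f g h : V)
    (hn : ([a,b,c,d,e,f,g,h] : List V).Nodup)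
    (h1 : G.Adj a b) (h2 : G.Adj b c) (h3 : G.Adj c d) (h4 : G.Adj d e)
    (h5 : G.Adj e f) (h6 : G.Adj f g) (h7 : G.Adj g h) (h9 : G.Adj h a) : False := by
  have hp : (Walk.cons h2 (Walk.cons h3 (Walk.cons h4 (Walk.cons h5
      (Walk.cons h6 (Walk.cons h7 (Walk.cons h9 Walk.nil))))))).IsPath := by
    simp only [List.nodup_cons, List.mem_cons, List.not_mem_nil, or_false, List.nodup_nil,
      not_or, and_true] at hn
    repeat apply Walk.IsPath.cons
    · exact Walk.IsPath.nil
    all_goals simp_all [eq_comm]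
  have hc : (Walk.cons h1 (Walk.cons h2 (Walk.cons h3 (Walk.cons h4 (Walk.cons h5
      (Walk.cons h6 (Walk.cons h7 (Walk.cons h9 Walk.nil)))))))).IsCycle := by
    rw [Walk.cons_isCycle_iff]
    refine ⟨hp, ?_⟩
    simp only [List.nodup_cons, List.mem_cons, List.not_mem_nil, or_false, List.nodup_nil,
      not_or, and_true] at hn
    simp only [Walk.edges_cons, Walk.edges_nil, List.mem_cons, List.not_mem_nil, or_false,
      Sym2.eq_iff, not_or]
    obtain ⟨⟨hab,hac,had,hae,haf,hag,hah⟩,⟨hbc,hbd,hbe,hbf,hbg,hbh⟩,-⟩ := hn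
    tauto
  exact h8 a _ hc rfl

/-- Alternating A/B list of 8 vertices is nodup. -/
lemma altNodup {V : Type*} {A : Set V} {a1 a2 a3 a4 b1 b2 b3 b4 : V}
    (ha1 : a1 ∈ A) (ha2 : a2 ∈ A) (ha3 : a3 ∈ A) (ha4 : a4 ∈ A)
    (hb1 : b1 ∉ A) (hb2 : b2 ∉ A) (hb3 : b3 ∉ A) (hb4 : b4 ∉ A)
    (h12 : a1 ≠ a2) (h13 : a1 ≠ a3) (h14 : a1 ≠ a4)
    (h23 : a2 ≠ a3) (h24 : a2 ≠ a4) (h34 : a3 ≠ a4)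
    (g12 : b1 ≠ b2) (g13 : b1 ≠ b3) (g14 : b1 ≠ b4)
    (g23 : b2 ≠ b3) (g24 : b2 ≠ b4) (g34 : b3 ≠ b4) :
    ([a1, b1, a2, b2, a3, b3, a4, b4] : List V).Nodup := by
  have c11 : a1 ≠ b1 := fun h => hb1 (h ▸ ha1)
  have c12 : a1 ≠ b2 := fun h => hb2 (h ▸ ha1)
  have c13 : a1 ≠ b3 := fun h => hb3 (h ▸ ha1)
  have c14 : a1 ≠ b4 := fun h => hb4 (h ▸ ha1)
  have c21 : a2 ≠ b1 := fun h => hb1 (h ▸ ha2)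
  have c22 : a2 ≠ b2 := fun h => hb2 (h ▸ ha2)
  have c23 : a2 ≠ b3 := fun h => hb3 (h ▸ ha2)
  have c24 : a2 ≠ b4 := fun h => hb4 (h ▸ ha2)
  have c31 : a3 ≠ b1 := fun h => hb1 (h ▸ ha3)
  have c32 : a3 ≠ b2 := fun h => hb2 (h ▸ ha3)
  have c33 : a3 ≠ b3 := fun h => hb3 (h ▸ ha3)
  have c34 : a3 ≠ b4 := fun h => hb4 (h ▸ ha3)
  have c41 : a4 ≠ b1 := fun h => hb1 (h ▸ ha4)
  have c42 : a4 ≠ b2 := fun h => hb2 (h ▸ ha4)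
  have c43 : a4 ≠ b3 := fun h => hb3 (h ▸ ha4)
  have c44 : a4 ≠ b4 := fun h => hb4 (h ▸ ha4)
  simp only [List.nodup_cons, List.mem_cons, List.not_mem_nil, or_false, not_or,
    List.nodup_nil, and_true]
  exact ⟨⟨c11, h12, c12, h13, c13, h14, c14⟩,
    ⟨Ne.symm c21, g12, Ne.symm c31, g13, Ne.symm c41, g14⟩,
    ⟨c22, h23, c23, h24, c24⟩, ⟨Ne.symm c32, g23, Ne.symm c42, g24⟩,
    ⟨c33, h34, c34⟩, ⟨Ne.symm c43, g34⟩, c44, fun h => h⟩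

/-- The shared-vertex case: `u` common, `p,q` the other vertices of the two fat pairs. -/
lemma sharedCase {V : Type*} (G : SimpleGraph V) (A : Set V)
    (hbip : ∀ u v, G.Adj u v → (u ∈ A ↔ v ∉ A))
    (h8 : ∀ (v : V) (w : G.Walk v v), w.IsCycle → w.length ≠ 8)
    (u p q x y a b c d : V)
    (hu : u ∈ A) (hp : p ∈ A) (hq : q ∈ A)
    (hup : u ≠ p) (huq : u ≠ q) (hpq : p ≠ q)
    (hfat_up : FatPair G u p) (hfat_uq : FatPair G u q)
    (hsc : SixCycle G u a p b c d) (hbd : FatPair G b d)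
    (hxy : x ≠ y)
    (hxu : G.Adj u x) (hxp : G.Adj p x) (hxq : G.Adj q x)
    (hyu : G.Adj u y) (hyp : G.Adj p y) (hyq : G.Adj q y) : False := by
  obtain ⟨hnd6, h1, h2, h3, h4, h5, h6⟩ := hsc
  -- h1 : Adj u a, h2 : Adj a p, h3 : Adj p b, h4 : Adj b c, h5 : Adj c d, h6 : Adj d u
  have hbd_ne : b ≠ d := by
    simp only [List.nodup_cons, List.mem_cons, List.not_mem_nil, or_false, not_or,
      List.nodup_nil, and_true] at hnd6
    exact hnd6.2.2.2.1.2
  have hbA : b ∉ A := (hbip p b h3).mp hp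
  have hdA : d ∉ A := fun hd => ((hbip d u h6).mp hd) hu
  have hxA : x ∉ A := (hbip u x hxu).mp hu
  have hyA : y ∉ A := (hbip u y hyu).mp hu
  obtain ⟨c', hc'mem, hc'u, hc'p, hc'q⟩ := pick3' hbd u p q
  obtain ⟨hbc', hdc'⟩ := hc'mem
  have hc'A : c' ∈ A := by
    by_contra h
    exact hbA ((hbip b c' hbc').mpr h)
  -- Case 1: some common neighbor p' of p,q,u with p' ∉ {b,d}
  have key : ∀ p', p' ∉ A → p' ≠ b → p' ≠ d → G.Adj p p' → G.Adj q p' → False := by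
    intro p' hp'A hp'b hp'd hpp' hqp'
    obtain ⟨qv, ⟨hqvu, hqvq⟩, hqvb, hqvd, hqvp'⟩ := pick3' hfat_uq b d p'
    have hqvA : qv ∉ A := (hbip u qv hqvu).mp hu
    -- cycle u d c' b p p' q qv
    refine eightCycleFalse G h8 u d c' b p p' q qv ?_
      h6.symm hdc' hbc'.symm h3.symm hpp' hqp'.symm hqvq hqvu.symm
    exact altNodup hu hc'A hp hq hdA hbA hp'A hqvA
      (Ne.symm hc'u) hup huq hc'p hc'q hpq
      (Ne.symm hbd_ne) (Ne.symm hp'd) (Ne.symm hqvd) (Ne.symm hp'b) (Ne.symm hqvb)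
      (fun h => hqvp' h.symm)
  by_cases hxb : x ≠ b ∧ x ≠ d
  · exact key x hxA hxb.1 hxb.2 hxp hxq
  by_cases hyb : y ≠ b ∧ y ≠ d
  · exact key y hyA hyb.1 hyb.2 hyp hyq
  -- Case 2: {x,y} = {b,d}, so both b and d are adjacent to u, p, q
  push_neg at hxb hyb
  have hdq : G.Adj q d := by
    by_cases hxd : x = d
    · exact hxd ▸ hxq
    · have hxbb : x = b := by
        by_cases h : x = b
        · exact h
        · exact absurd (hxb h) hxd
      have hyd : y = d := by
        by_cases h : y = b
        · exact absurd (hxbb.trans h.symm) hxy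
        · exact hyb h
      exact hyd ▸ hyq
  obtain ⟨qv, ⟨hqvu, hqvq⟩, hqvb, hqvd, -⟩ := pick3' hfat_uq b d d
  obtain ⟨z, ⟨hzu, hzp⟩, hzb, hzd, hzqv⟩ := pick3' hfat_up b d qv
  have hqvA : qv ∉ A := (hbip u qv hqvu).mp hu
  have hzA : z ∉ A := (hbip u z hzu).mp hu
  -- cycle u z p b c' d q qv
  refine eightCycleFalse G h8 u z p b c' d q qv ?_
    hzu hzp.symm h3 hbc' hdc'.symm hdq.symm hqvq hqvu.symm
  exact altNodup hu hp hc'A hq hzA hbA hdA hqvA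
    hup (Ne.symm hc'u) huq (Ne.symm hc'p) hpq hc'q
    hzb hzd hzqv hbd_ne (Ne.symm hqvb) (Ne.symm hqvd)

lemma disjointCase {V : Type*} (G : SimpleGraph V) (A : Set V)
    (hbip : ∀ u v, G.Adj u v → (u ∈ A ↔ v ∉ A))
    (h8 : ∀ (v : V) (w : G.Walk v v), w.IsCycle → w.length ≠ 8)
    (v₁ v₃ w₁ w₃ x y : V)
    (hv₁ : v₁ ∈ A) (hv₃ : v₃ ∈ A) (hw₁ : w₁ ∈ A) (hw₃ : w₃ ∈ A)
    (h12 : v₁ ≠ w₁) (h13 : v₁ ≠ w₃) (h14 : v₁ ≠ v₃)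
    (h23 : w₁ ≠ w₃) (h24 : w₁ ≠ v₃) (h34 : w₃ ≠ v₃)
    (hfat₁ : FatPair G v₁ v₃) (hfat₂ : FatPair G w₁ w₃)
    (hxy : x ≠ y)
    (hx1 : G.Adj v₁ x) (hx3 : G.Adj v₃ x) (hxw1 : G.Adj w₁ x) (hxw3 : G.Adj w₃ x)
    (hy1 : G.Adj v₁ y) (hy3 : G.Adj v₃ y) (hyw1 : G.Adj w₁ y) (hyw3 : G.Adj w₃ y) : False := by
  obtain ⟨z', ⟨hz'1, hz'3⟩, hz'x, hz'y, -⟩ := pick3' hfat₂ x y x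
  obtain ⟨z, ⟨hz1, hz3⟩, hzx, hzy, hzz'⟩ := pick3' hfat₁ x y z'
  have hxA : x ∉ A := (hbip v₁ x hx1).mp hv₁
  have hyA : y ∉ A := (hbip v₁ y hy1).mp hv₁
  have hzA : z ∉ A := (hbip v₁ z hz1).mp hv₁
  have hz'A : z' ∉ A := (hbip w₁ z' hz'1).mp hw₁
  -- cycle v₁ x w₁ z' w₃ y v₃ z
  refine eightCycleFalse G h8 v₁ x w₁ z' w₃ y v₃ z ?_
    hx1 hxw1.symm hz'1 hz'3.symm hyw3 hy3.symm hz3 hz1.symm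
  exact altNodup hv₁ hw₁ hw₃ hv₃ hxA hz'A hyA hzA
    h12 h13 h14 h23 h24 h34
    (Ne.symm hz'x) hxy (Ne.symm hzx) hz'y (Ne.symm hzz') (Ne.symm hzy)

/-- Let `G` be a `C_8`-free bipartite graph with parts `A` and `Aᶜ`. If `{v₁,v₃}` and
`{v₁',v₃'}` are distinct fat pairs in `A`, each being the `A`-side fat pair of a fat
6-cycle (whose `B`-side fat pair consists of the 4th and 6th vertices), then
`|N(v₁,v₃) ∩ N(v₁',v₃')| ≤ 1`. -/
theorem stmt_12 {V : Type*} (G : SimpleGraph V) (A : Set V)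
    (hbip : ∀ u v, G.Adj u v → (u ∈ A ↔ v ∉ A))
    (h8 : ∀ (v : V) (w : G.Walk v v), w.IsCycle → w.length ≠ 8)
    (v₁ v₃ w₁ w₃ : V)
    (hv₁ : v₁ ∈ A) (hv₃ : v₃ ∈ A) (hw₁ : w₁ ∈ A) (hw₃ : w₃ ∈ A)
    (hvne : v₁ ≠ v₃) (hwne : w₁ ≠ w₃)
    (hne : ({v₁, v₃} : Set V) ≠ {w₁, w₃})
    (hfat₁ : FatPair G v₁ v₃) (hfat₂ : FatPair G w₁ w₃)
    (hcyc₁ : ∃ a b c d : V, SixCycle G v₁ a v₃ b c d ∧ FatPair G b d)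
    (hcyc₂ : ∃ a b c d : V, SixCycle G w₁ a w₃ b c d ∧ FatPair G b d) :
    ({x | G.Adj v₁ x ∧ G.Adj v₃ x} ∩ {x | G.Adj w₁ x ∧ G.Adj w₃ x}).ncard ≤ 1 := by
  by_contra hcon
  push_neg at hcon
  set S := ({x | G.Adj v₁ x ∧ G.Adj v₃ x} ∩ {x | G.Adj w₁ x ∧ G.Adj w₃ x} : Set V) with hS
  have hfin : S.Finite := by
    by_contra hinf
    rw [Set.Infinite.ncard (by exact hinf)] at hcon; omega
  obtain ⟨x, y, hxS, hyS, hxy⟩ := (Set.one_lt_ncard_iff hfin).mp hcon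
  obtain ⟨⟨hx1, hx3⟩, hxw1, hxw3⟩ := hxS
  obtain ⟨⟨hy1, hy3⟩, hyw1, hyw3⟩ := hyS
  obtain ⟨a, b, c, d, hsc₁, hbd₁⟩ := hcyc₁
  by_cases h11 : v₁ = w₁
  · have h33 : v₃ ≠ w₃ := fun h => hne (by rw [h11, h])
    exact sharedCase G A hbip h8 v₁ v₃ w₃ x y a b c d hv₁ hv₃ hw₃
      hvne (h11 ▸ hwne) h33 hfat₁ (h11 ▸ hfat₂) hsc₁ hbd₁ hxy
      hx1 hx3 hxw3 hy1 hy3 hyw3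
  by_cases h13 : v₁ = w₃
  · have h31 : v₃ ≠ w₁ := fun h => hne (by rw [h13, h, Set.pair_comm])
    exact sharedCase G A hbip h8 v₁ v₃ w₁ x y a b c d hv₁ hv₃ hw₁
      hvne (fun h => hwne ((h13.symm.trans h).symm)) h31 hfat₁
      (h13 ▸ fatPair_symm hfat₂) hsc₁ hbd₁ hxy
      hx1 hx3 hxw1 hy1 hy3 hyw1
  by_cases h31 : v₃ = w₁
  · have h13' : v₁ ≠ w₃ := h13
    have huq : v₃ ≠ w₃ := fun h => hwne (h31.symm.trans h)
    exact sharedCase G A hbip h8 v₃ v₁ w₃ x y a d c b hv₃ hv₁ hw₃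
      (Ne.symm hvne) huq h13' (fatPair_symm hfat₁) (h31 ▸ hfat₂)
      (sixCycle_rev hsc₁) (fatPair_symm hbd₁) hxy
      hx3 hx1 hxw3 hy3 hy1 hyw3
  by_cases h33 : v₃ = w₃
  · have h11' : v₁ ≠ w₁ := h11
    have huq : v₃ ≠ w₁ := fun h => h31 h
    exact sharedCase G A hbip h8 v₃ v₁ w₁ x y a d c b hv₃ hv₁ hw₁
      (Ne.symm hvne) huq h11' (fatPair_symm hfat₁) (h33 ▸ fatPair_symm hfat₂)
      (sixCycle_rev hsc₁) (fatPair_symm hbd₁) hxy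
      hx3 hx1 hxw1 hy3 hy1 hyw1
  · exact disjointCase G A hbip h8 v₁ v₃ w₁ w₃ x y hv₁ hv₃ hw₁ hw₃
      h11 h13 hvne hwne (fun h => h31 h.symm) (fun h => h33 h.symm) hfat₁ hfat₂ hxy
      hx1 hx3 hxw1 hxw3 hy1 hy3 hyw1 hyw3
end
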